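/- arXiv:1209.5419 — 5 statements merged into one kernel-verified Lean document; each statement's English description precedes it below -/
import Mathlib

section
/- Let p be an odd positive integer and f a smooth real function. If y(t,x) is a smooth quasi-periodic solution of the equation y_tt - y_xx = (y_x)^p + f(y) on the circle x ∈ T = R/2πZ, then y is independent of x, i.e. y(t,x) = c(t) for some function c. -/
/- STATEMENT 0: odd p, smooth f; any smooth quasi-periodic solution of
   y_tt - y_xx = (y_x)^p + f(y) on the circle is independent of x. -/

noncomputable section
open Real

/-- time derivative -/
def dt (y : ℝ → ℝ → ℝ) (t x : ℝ) : ℝ := deriv (fun s => y s x) t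
/-- second time derivative -/
def dtt (y : ℝ → ℝ → ℝ) (t x : ℝ) : ℝ := deriv (fun s => deriv (fun s' => y s' x) s) t
/-- space derivative -/
def dx (y : ℝ → ℝ → ℝ) (t x : ℝ) : ℝ := deriv (fun z => y t z) x
/-- second space derivative -/
def dxx (y : ℝ → ℝ → ℝ) (t x : ℝ) : ℝ := deriv (fun z => deriv (fun z' => y t z') z) x

/-- `y(t,x)`, 2π-periodic in `x`, is quasi-periodic in time: `y(t,x) = Y(ωt,x)`
with `Y` smooth on `𝕋ⁿ × 𝕋` and `ω ∈ ℝⁿ` rationally independent. -/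
def QuasiPeriodic (y : ℝ → ℝ → ℝ) : Prop :=
  ∃ (n : ℕ) (Y : (Fin n → ℝ) → ℝ → ℝ) (ω : Fin n → ℝ),
    0 < n ∧
    ContDiff ℝ (⊤ : ℕ∞) (fun p : (Fin n → ℝ) × ℝ => Y p.1 p.2) ∧
    (∀ θ x i, Y (Function.update θ i (θ i + 2 * π)) x = Y θ x) ∧
    (∀ θ x, Y θ (x + 2 * π) = Y θ x) ∧
    (∀ k : Fin n → ℤ, (∑ i, (k i : ℝ) * ω i) = 0 → k = 0) ∧
    (∀ t x, y t x = Y (fun i => ω i * t) x)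

/-- A continuous nonnegative periodic function with zero integral over a period vanishes. -/
lemma aux_zero_of_periodic_integral_zero (h : ℝ → ℝ) (T : ℝ) (hT : 0 < T)
    (hc : Continuous h) (hnn : ∀ x, 0 ≤ h x) (hper : Function.Periodic h T)
    (hint : (∫ x in (0:ℝ)..T, h x) = 0) : ∀ x, h x = 0 := by
  intro x0
  set a := x0 - T / 2 with ha
  have hwin : (∫ x in a..(a + T), h x) = 0 := by
    rw [hper.intervalIntegral_add_eq a 0]
    simpa using hint
  have hii : ∀ u v : ℝ, IntervalIntegrable h MeasureTheory.volume u v := fun u v =>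
    hc.intervalIntegrable u v
  set φ : ℝ → ℝ := fun u => ∫ x in a..u, h x with hφ
  have hφ0 : ∀ u, u ∈ Set.Icc a (a + T) → φ u = 0 := by
    intro u hu
    have h1 : 0 ≤ φ u := intervalIntegral.integral_nonneg hu.1 (fun x _ => hnn x)
    have h2 : 0 ≤ ∫ x in u..(a + T), h x :=
      intervalIntegral.integral_nonneg hu.2 (fun x _ => hnn x)
    have hadd : φ u + ∫ x in u..(a + T), h x = 0 := by
      rw [hφ]; rw [intervalIntegral.integral_add_adjacent_intervals (hii a u) (hii u (a+T))]
      exact hwin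
    linarith
  have hx0mem : x0 ∈ Set.Ioo a (a + T) := by
    constructor <;> simp [ha] <;> linarith
  have hev : φ =ᶠ[nhds x0] (fun _ => (0:ℝ)) := by
    filter_upwards [Ioo_mem_nhds hx0mem.1 hx0mem.2] with u hu
    exact hφ0 u ⟨le_of_lt hu.1, le_of_lt hu.2⟩
  have hd : HasDerivAt φ (h x0) x0 :=
    intervalIntegral.integral_hasDerivAt_right (hii a x0)
      (hc.stronglyMeasurableAtFilter _ _) hc.continuousAt
  have hde : deriv φ x0 = h x0 := hd.deriv
  rw [hev.deriv_eq] at hde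
  simp at hde
  exact hde.symm

/-- Monotone + recurrent implies constant. -/
lemma aux_const_of_monotone_recurrent (M : ℝ → ℝ) (hmono : Monotone M)
    (hrec : ∀ t : ℝ, ∀ ε > 0, ∀ T : ℝ, ∃ τ : ℝ, T ≤ τ ∧ M (t + τ) < M t + ε) :
    ∀ s t : ℝ, M s = M t := by
  have key : ∀ s t : ℝ, s ≤ t → M t ≤ M s := by
    intro s t hst
    by_contra hlt
    push_neg at hlt
    obtain ⟨τ, hτ, hMτ⟩ := hrec s (M t - M s) (by linarith) (t - s)
    have : M t ≤ M (s + τ) := hmono (by linarith)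
    linarith
  intro s t
  rcases le_total s t with h | h
  · exact le_antisymm (hmono h) (key s t h)
  · exact (le_antisymm (hmono h) (key t s h)).symm

lemma aux_update_int (n : ℕ) (g : (Fin n → ℝ) → ℝ) (c : ℝ)
    (hg : ∀ θ i, g (Function.update θ i (θ i + c)) = g θ) :
    ∀ (m : ℤ) (θ : Fin n → ℝ) (i : Fin n), g (Function.update θ i (θ i + (m : ℝ) * c)) = g θ := by
  intro m
  induction m using Int.induction_on with
  | zero => intro θ i; simp
  | succ m ih =>
    intro θ i
    push_cast
    push_cast at ih
    have key : Function.update (Function.update θ i (θ i + (m : ℝ) * c)) i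
        ((Function.update θ i (θ i + (m : ℝ) * c)) i + c)
        = Function.update θ i (θ i + ((m : ℝ) + 1) * c) := by
      rw [Function.update_self, Function.update_idem]
      ring_nf
    rw [← key, hg, ih]
  | pred m ih =>
    intro θ i
    push_cast
    push_cast at ih
    have key : Function.update (Function.update θ i (θ i + (-(m : ℝ) - 1) * c)) i
        ((Function.update θ i (θ i + (-(m : ℝ) - 1) * c)) i + c)
        = Function.update θ i (θ i + (-(m : ℝ)) * c) := by
      rw [Function.update_self, Function.update_idem]
      ring_nf
    have h2 := hg (Function.update θ i (θ i + (-(m : ℝ) - 1) * c)) i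
    rw [key] at h2
    rw [← h2]
    exact ih θ i

lemma aux_lattice (n : ℕ) (g : (Fin n → ℝ) → ℝ) (c : ℝ)
    (hg : ∀ θ i, g (Function.update θ i (θ i + c)) = g θ)
    (k : Fin n → ℤ) (θ : Fin n → ℝ) :
    g (fun i => θ i + (k i : ℝ) * c) = g θ := by
  have main : ∀ s : Finset (Fin n), ∀ θ : Fin n → ℝ,
      g (fun i => θ i + if i ∈ s then (k i : ℝ) * c else 0) = g θ := by
    intro s
    induction s using Finset.induction_on with
    | empty => intro θ; simp
    | insert j s hj ih =>
      intro θ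
      set θ' : Fin n → ℝ := fun i => θ i + if i ∈ s then (k i : ℝ) * c else 0 with hθ'
      have he : (fun i => θ i + if i ∈ insert j s then (k i : ℝ) * c else 0)
          = Function.update θ' j (θ' j + (k j : ℝ) * c) := by
        funext i
        by_cases hij : i = j
        · subst hij
          simp [hθ', Function.update_self, hj]
        · simp [Function.update_of_ne hij, hθ', Finset.mem_insert, hij]
      rw [he, aux_update_int n g c hg (k j) θ' j, ih]
  have := main Finset.univ θ
  simpa using this

lemma aux_recurrence (n : ℕ) (ω : Fin n → ℝ) (ε : ℝ) (hε : 0 < ε) (T : ℝ) :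
    ∃ τ : ℝ, T ≤ τ ∧ ∃ k : Fin n → ℤ, ∀ i, |ω i * τ - (k i : ℝ) * (2 * π)| < ε := by
  have h2π : (0:ℝ) < 2 * π := by positivity
  set v : ℕ → (Fin n → ℝ) := fun m i => Int.fract (ω i * m / (2 * π)) with hv
  have hmem : ∀ m, v m ∈ Set.Icc (0 : Fin n → ℝ) 1 := by
    intro m
    constructor <;> intro i
    · exact Int.fract_nonneg _
    · exact (Int.fract_lt_one _).le
  obtain ⟨x, -, φ, hφ, hconv⟩ := isCompact_Icc.tendsto_subseq hmem
  have hε' : 0 < ε / (8 * π) := by positivity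
  obtain ⟨N, hN⟩ := Metric.tendsto_atTop.mp hconv (ε / (8 * π)) hε'
  set d : ℕ := ⌈T⌉₊ + 1 with hd
  have hφd : ∀ e : ℕ, φ N + e ≤ φ (N + e) := by
    intro e
    induction e with
    | zero => simp
    | succ e ih =>
      have : φ (N + e) < φ (N + (e + 1)) := hφ (by omega)
      omega
  set m1 : ℕ := φ N with hm1
  set m2 : ℕ := φ (N + d) with hm2
  have hm12 : m1 + d ≤ m2 := hφd d
  refine ⟨(m2 : ℝ) - m1, ?_, ?_⟩
  · have h1 : (T : ℝ) ≤ d := by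
      calc T ≤ (⌈T⌉₊ : ℝ) := Nat.le_ceil T
      _ ≤ d := by exact_mod_cast Nat.le_succ _
    have h2 : (d : ℝ) ≤ (m2 : ℝ) - m1 := by
      have h3 : (m1 : ℝ) + d ≤ m2 := by exact_mod_cast hm12
      linarith
    linarith
  · refine ⟨fun i => ⌊ω i * m2 / (2 * π)⌋ - ⌊ω i * m1 / (2 * π)⌋, fun i => ?_⟩
    have hexp : ∀ m : ℕ, ω i * m = (⌊ω i * m / (2 * π)⌋ : ℝ) * (2 * π)
        + Int.fract (ω i * m / (2 * π)) * (2 * π) := by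
      intro m
      have h0 := Int.floor_add_fract (ω i * m / (2 * π))
      have h2 : ((⌊ω i * m / (2 * π)⌋ : ℝ) + Int.fract (ω i * m / (2 * π))) * (2 * π)
          = ω i * m := by
        rw [h0]; field_simp
      linarith [h2]
    have hkey : ω i * ((m2 : ℝ) - m1)
        - ((⌊ω i * m2 / (2 * π)⌋ - ⌊ω i * m1 / (2 * π)⌋ : ℤ) : ℝ) * (2 * π)
        = (v m2 i - v m1 i) * (2 * π) := by
      have e1 := hexp m1
      have e2 := hexp m2
      simp only [hv]
      push_cast
      linear_combination e2 - e1
    rw [hkey]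
    have d2 := hN (N + d) (Nat.le_add_right _ _)
    have d1 := hN N le_rfl
    simp only [Function.comp] at d1 d2
    have hcomp : dist (v m2) (v m1) < ε / (4 * π) := by
      calc dist (v m2) (v m1) ≤ dist (v m2) x + dist x (v m1) := dist_triangle _ _ _
      _ = dist (v m2) x + dist (v m1) x := by rw [dist_comm x]
      _ < ε / (8 * π) + ε / (8 * π) := add_lt_add d2 d1
      _ = ε / (4 * π) := by ring
    have hi : |v m2 i - v m1 i| ≤ dist (v m2) (v m1) := by
      have := dist_le_pi_dist (v m2) (v m1) i
      rwa [Real.dist_eq] at this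
    have hlt : |v m2 i - v m1 i| < ε / (4 * π) := lt_of_le_of_lt hi hcomp
    rw [abs_mul, abs_of_pos h2π]
    calc |v m2 i - v m1 i| * (2 * π) < (ε / (4 * π)) * (2 * π) :=
          mul_lt_mul_of_pos_right hlt h2π
    _ = ε / 2 := by field_simp; ring
    _ < ε := by linarith

theorem no_qp_solutions_yx_pow_odd
    (p : ℕ) (hp : Odd p) (hp0 : 0 < p)
    (f : ℝ → ℝ) (hf : ContDiff ℝ (⊤ : ℕ∞) f)
    (y : ℝ → ℝ → ℝ)
    (hy : ContDiff ℝ (⊤ : ℕ∞) (fun q : ℝ × ℝ => y q.1 q.2))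
    (hqp : QuasiPeriodic y)
    (hpde : ∀ t x, dtt y t x - dxx y t x = (dx y t x) ^ p + f (y t x)) :
    ∃ c : ℝ → ℝ, ∀ t x, y t x = c t := by
  obtain ⟨n, Y, ω, hn, hYs, hYper, hYxper, hindep, hrep⟩ := hqp
  have hπ : (0:ℝ) < 2 * π := by positivity
  -- derivative machinery for y
  have hyd : Differentiable ℝ (fun q : ℝ × ℝ => y q.1 q.2) := hy.differentiable (by simp)
  set DF := fderiv ℝ (fun q : ℝ × ℝ => y q.1 q.2) with hDFdef
  set D2 := fderiv ℝ DF with hD2def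
  have hFd : ∀ q, HasFDerivAt (fun q : ℝ × ℝ => y q.1 q.2) (DF q) q :=
    fun q => (hyd q).hasFDerivAt
  have hDF1 : ContDiff ℝ 1 DF := hy.fderiv_right (WithTop.coe_le_coe.mpr le_top)
  have hDFc : Continuous DF := hDF1.continuous
  have hDFd : ∀ q, HasFDerivAt DF (D2 q) q := fun q => ((hDF1.differentiable one_ne_zero) q).hasFDerivAt
  have hD2c : Continuous D2 := hDF1.continuous_fderiv one_ne_zero
  have hsymm : ∀ (q u v : ℝ × ℝ), D2 q u v = D2 q v u := fun q u v =>
    (hy.contDiffAt.isSymmSndFDerivAt (by rw [minSmoothness_of_isRCLikeNormedField]; exact (WithTop.coe_le_coe.mpr (le_top : (2:ℕ∞) ≤ ⊤)))) u v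
  have hline : ∀ (v : ℝ × ℝ) (q : ℝ × ℝ),
      HasFDerivAt (fun q' => DF q' v) ((D2 q).flip v) q := by
    intro v q
    have h := (hDFd q).clm_apply (hasFDerivAt_const v q)
    simpa using h
  have hcurve_t : ∀ (t x : ℝ), HasDerivAt (fun s : ℝ => ((s, x) : ℝ × ℝ)) ((1:ℝ), (0:ℝ)) t :=
    fun t x => (hasDerivAt_id t).prodMk (hasDerivAt_const t x)
  have hcurve_x : ∀ (t x : ℝ), HasDerivAt (fun z : ℝ => ((t, z) : ℝ × ℝ)) ((0:ℝ), (1:ℝ)) x :=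
    fun t x => (hasDerivAt_const x t).prodMk (hasDerivAt_id x)
  have hyt : ∀ t x, HasDerivAt (fun s => y s x) (DF (t, x) (1, 0)) t := fun t x =>
    by have := (hFd (t, x)).comp_hasDerivAt t (hcurve_t t x); exact this
  have hyx : ∀ t x, HasDerivAt (fun z => y t z) (DF (t, x) (0, 1)) x := fun t x =>
    by have := (hFd (t, x)).comp_hasDerivAt x (hcurve_x t x); exact this
  have hAt : ∀ t x, HasDerivAt (fun s => DF (s, x) (1,0)) (D2 (t,x) (1,0) (1,0)) t := by
    intro t x
    have := (hline (1,0) (t,x)).comp_hasDerivAt t (hcurve_t t x)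
    simp only [ContinuousLinearMap.flip_apply] at this; exact this
  have hAx : ∀ t x, HasDerivAt (fun z => DF (t, z) (1,0)) (D2 (t,x) (0,1) (1,0)) x := by
    intro t x
    have := (hline (1,0) (t,x)).comp_hasDerivAt x (hcurve_x t x)
    simp only [ContinuousLinearMap.flip_apply] at this; exact this
  have hBt : ∀ t x, HasDerivAt (fun s => DF (s, x) (0,1)) (D2 (t,x) (1,0) (0,1)) t := by
    intro t x
    have := (hline (0,1) (t,x)).comp_hasDerivAt t (hcurve_t t x)
    simp only [ContinuousLinearMap.flip_apply] at this; exact this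
  have hBx : ∀ t x, HasDerivAt (fun z => DF (t, z) (0,1)) (D2 (t,x) (0,1) (0,1)) x := by
    intro t x
    have := (hline (0,1) (t,x)).comp_hasDerivAt x (hcurve_x t x)
    simp only [ContinuousLinearMap.flip_apply] at this; exact this
  -- identify the pde derivatives
  have hdx' : ∀ t x, dx y t x = DF (t,x) (0,1) := fun t x => (hyx t x).deriv
  have hdtt' : ∀ t x, dtt y t x = D2 (t,x) (1,0) (1,0) := by
    intro t x
    have h1 : (fun s => deriv (fun s' => y s' x) s) = fun s => DF (s, x) (1,0) := by
      funext s; exact (hyt s x).deriv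
    show deriv (fun s => deriv (fun s' => y s' x) s) t = _
    rw [h1]
    exact (hAt t x).deriv
  have hdxx' : ∀ t x, dxx y t x = D2 (t,x) (0,1) (0,1) := by
    intro t x
    have h1 : (fun z => deriv (fun z' => y t z') z) = fun z => DF (t, z) (0,1) := by
      funext z; exact (hyx t z).deriv
    show deriv (fun z => deriv (fun z' => y t z') z) x = _
    rw [h1]
    exact (hBx t x).deriv
  have hpde' : ∀ t x, D2 (t,x) (1,0) (1,0)
      = D2 (t,x) (0,1) (0,1) + DF (t,x) (0,1) ^ p + f (y t x) := by
    intro t x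
    have h := hpde t x
    rw [hdtt' t x, hdxx' t x, hdx' t x] at h
    linarith
  -- antiderivative of f
  set F₀ : ℝ → ℝ := fun z => ∫ u in (0:ℝ)..z, f u with hF₀def
  have hF₀ : ∀ z, HasDerivAt F₀ (f z) z := fun z =>
    intervalIntegral.integral_hasDerivAt_right ((hf.continuous).intervalIntegrable _ _)
      ((hf.continuous).stronglyMeasurableAtFilter _ _) (hf.continuous).continuousAt
  -- the energy-type function g and its x-derivative
  set g : ℝ → ℝ → ℝ := fun t z =>
    (DF (t,z) (1,0) * DF (t,z) (1,0) + DF (t,z) (0,1) * DF (t,z) (0,1)) / 2 + F₀ (y t z)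
    with hgdef
  set gx : ℝ → ℝ → ℝ := fun t x =>
    (D2 (t,x) (0,1) (1,0) * DF (t,x) (1,0) + DF (t,x) (1,0) * D2 (t,x) (0,1) (1,0)
      + (D2 (t,x) (0,1) (0,1) * DF (t,x) (0,1) + DF (t,x) (0,1) * D2 (t,x) (0,1) (0,1))) / 2
    + f (y t x) * DF (t,x) (0,1) with hgxdef
  have hg : ∀ t x, HasDerivAt (fun z => g t z) (gx t x) x := by
    intro t x
    have h1 := ((hAx t x).mul (hAx t x)).add ((hBx t x).mul (hBx t x))
    have h2 := h1.div_const 2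
    have h3 := (hF₀ (y t x)).comp x (hyx t x)
    exact h2.add h3
  -- the integrand derivative
  set Qt : ℝ → ℝ → ℝ := fun t x =>
    D2 (t,x) (1,0) (0,1) * DF (t,x) (1,0) + DF (t,x) (0,1) * D2 (t,x) (1,0) (1,0) with hQtdef
  have hQt : ∀ t x, HasDerivAt (fun s => DF (s,x) (0,1) * DF (s,x) (1,0)) (Qt t x) t :=
    fun t x => (hBt t x).mul (hAt t x)
  have hsplit : ∀ t x, Qt t x = gx t x + DF (t,x) (0,1) ^ (p+1) := by
    intro t x
    have h1 := hsymm (t,x) (1,0) (0,1)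
    simp only [hQtdef, hgxdef]
    rw [hpde' t x, h1]
    ring
  -- continuity facts
  have contA : Continuous (fun q : ℝ × ℝ => DF q (1,0)) := hDFc.clm_apply continuous_const
  have contB : Continuous (fun q : ℝ × ℝ => DF q (0,1)) := hDFc.clm_apply continuous_const
  have contD2 : ∀ u v : ℝ × ℝ, Continuous (fun q : ℝ × ℝ => D2 q u v) := fun u v =>
    (hD2c.clm_apply continuous_const).clm_apply continuous_const
  have contQtJ : Continuous (fun q : ℝ × ℝ => Qt q.1 q.2) := by
    simp only [hQtdef]
    exact ((contD2 (1,0) (0,1)).mul contA).add (contB.mul (contD2 (1,0) (1,0)))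
  have contBAx : ∀ t, Continuous (fun x => DF (t,x) (0,1) * DF (t,x) (1,0)) := by
    intro t
    have : Continuous (fun x : ℝ => ((t, x) : ℝ × ℝ)) := continuous_const.prodMk continuous_id
    exact (contB.comp this).mul (contA.comp this)
  have contQtx : ∀ t, Continuous (fun x => Qt t x) := by
    intro t
    have hc : Continuous (fun x : ℝ => ((t, x) : ℝ × ℝ)) := continuous_const.prodMk continuous_id
    exact contQtJ.comp hc
  have contgxx : ∀ t, Continuous (fun x => gx t x) := by
    intro t
    have hc : Continuous (fun x : ℝ => ((t, x) : ℝ × ℝ)) := continuous_const.prodMk continuous_id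
    simp only [hgxdef]
    have hy2 : Continuous (fun x : ℝ => y t x) := hy.continuous.comp hc
    exact (((((contD2 (0,1) (1,0)).comp hc).mul (contA.comp hc)).add
      ((contA.comp hc).mul ((contD2 (0,1) (1,0)).comp hc))).add
      ((((contD2 (0,1) (0,1)).comp hc).mul (contB.comp hc)).add
      ((contB.comp hc).mul ((contD2 (0,1) (0,1)).comp hc)))).div_const 2 |>.add
      ((hf.continuous.comp hy2).mul (contB.comp hc))
  have contBx : ∀ t, Continuous (fun x => DF (t,x) (0,1)) := by
    intro t
    have hc : Continuous (fun x : ℝ => ((t, x) : ℝ × ℝ)) := continuous_const.prodMk continuous_id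
    exact contB.comp hc
  -- periodicity in x
  have hyper : ∀ t x, y t (x + 2*π) = y t x := by
    intro t x; rw [hrep t (x + 2*π), hrep t x, hYxper]
  have hAper : ∀ t x, DF (t, x + 2*π) (1,0) = DF (t,x) (1,0) := by
    intro t x
    have h1 : (fun s => y s (x + 2*π)) = fun s => y s x := funext fun s => hyper s x
    calc DF (t, x + 2*π) (1,0) = deriv (fun s => y s (x + 2*π)) t :=
          ((hyt t (x + 2*π)).deriv).symm
    _ = deriv (fun s => y s x) t := by rw [h1]
    _ = DF (t,x) (1,0) := (hyt t x).deriv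
  have hBper : ∀ t x, DF (t, x + 2*π) (0,1) = DF (t,x) (0,1) := by
    intro t x
    have h1 : (fun z => y t (z + 2*π)) = fun z => y t z := funext fun z => hyper t z
    calc DF (t, x + 2*π) (0,1) = deriv (fun z => y t z) (x + 2*π) :=
          ((hyx t (x + 2*π)).deriv).symm
    _ = deriv (fun z => y t (z + 2*π)) x := (deriv_comp_add_const (fun z => y t z) (2*π) x).symm
    _ = deriv (fun z => y t z) x := by rw [h1]
    _ = DF (t,x) (0,1) := (hyx t x).deriv
  -- the Lyapunov function M
  set M : ℝ → ℝ := fun t => ∫ x in (0:ℝ)..(2*π), DF (t,x) (0,1) * DF (t,x) (1,0) with hMdef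
  have hMd : ∀ t0, HasDerivAt M (∫ x in (0:ℝ)..(2*π), Qt t0 x) t0 := by
    intro t0
    have hK : IsCompact ((Set.Icc (t0-1) (t0+1)) ×ˢ (Set.uIcc (0:ℝ) (2*π))) :=
      isCompact_Icc.prod isCompact_uIcc
    obtain ⟨C, hC⟩ := hK.exists_bound_of_continuousOn contQtJ.continuousOn
    have hball : ∀ s ∈ Metric.ball t0 1, s ∈ Set.Icc (t0-1) (t0+1) := by
      intro s hs
      rw [Metric.mem_ball, Real.dist_eq] at hs
      have := abs_lt.mp hs
      constructor <;> linarith [this.1, this.2]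
    have key := intervalIntegral.hasDerivAt_integral_of_dominated_loc_of_deriv_le
      (F := fun s x => DF (s,x) (0,1) * DF (s,x) (1,0)) (F' := fun s x => Qt s x)
      (x₀ := t0) (a := (0:ℝ)) (b := 2*π) (bound := fun _ => C) (s := Metric.ball t0 1)
      (μ := MeasureTheory.volume) (Metric.ball_mem_nhds t0 one_pos)
      (Filter.Eventually.of_forall fun s => (contBAx s).aestronglyMeasurable)
      ((contBAx t0).intervalIntegrable _ _)
      ((contQtx t0).aestronglyMeasurable)
      (MeasureTheory.ae_of_all _ fun x hx s hs => by
        have := hC (s, x) ⟨hball s hs, Set.uIoc_subset_uIcc hx⟩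
        simpa using this)
      (intervalIntegrable_const)
      (MeasureTheory.ae_of_all _ fun x hx s hs => hQt s x)
    exact key.2
  have hIeq : ∀ t, (∫ x in (0:ℝ)..(2*π), Qt t x)
      = ∫ x in (0:ℝ)..(2*π), DF (t,x) (0,1) ^ (p+1) := by
    intro t
    have hint1 : IntervalIntegrable (fun x => gx t x) MeasureTheory.volume 0 (2*π) :=
      (contgxx t).intervalIntegrable _ _
    have hint2 : IntervalIntegrable (fun x => DF (t,x) (0,1) ^ (p+1))
        MeasureTheory.volume 0 (2*π) := ((contBx t).pow _).intervalIntegrable _ _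
    have h1 : (∫ x in (0:ℝ)..(2*π), Qt t x)
        = (∫ x in (0:ℝ)..(2*π), gx t x) + ∫ x in (0:ℝ)..(2*π), DF (t,x) (0,1) ^ (p+1) := by
      rw [← intervalIntegral.integral_add hint1 hint2]
      exact intervalIntegral.integral_congr fun x _ => hsplit t x
    have h2 : (∫ x in (0:ℝ)..(2*π), gx t x) = g t (2*π) - g t 0 :=
      intervalIntegral.integral_eq_sub_of_hasDerivAt (fun x _ => hg t x) hint1
    have h3 : g t (2*π) = g t 0 := by
      have e1 := hAper t 0
      have e2 := hBper t 0
      have e3 := hyper t 0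
      rw [zero_add] at e1 e2 e3
      simp only [hgdef, e1, e2, e3]
    rw [h1, h2, h3]
    ring
  have hderiv_nonneg : ∀ t, 0 ≤ ∫ x in (0:ℝ)..(2*π), Qt t x := by
    intro t
    rw [hIeq t]
    apply intervalIntegral.integral_nonneg (by positivity)
    intro x _
    exact (hp.add_one).pow_nonneg _
  have hMdiff : Differentiable ℝ M := fun t => (hMd t).differentiableAt
  have hMmono : Monotone M := by
    apply monotone_of_deriv_nonneg hMdiff
    intro t
    rw [(hMd t).deriv]
    exact hderiv_nonneg t
  -- the torus function G
  have hYd : Differentiable ℝ (fun P : (Fin n → ℝ) × ℝ => Y P.1 P.2) := hYs.differentiable (by simp)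
  set DY := fderiv ℝ (fun P : (Fin n → ℝ) × ℝ => Y P.1 P.2) with hDYdef
  have hYfd : ∀ P, HasFDerivAt (fun P : (Fin n → ℝ) × ℝ => Y P.1 P.2) (DY P) P :=
    fun P => (hYd P).hasFDerivAt
  have hDYc : Continuous DY := hYs.continuous_fderiv (by simp)
  set G : (Fin n → ℝ) → ℝ := fun θ =>
    ∫ x in (0:ℝ)..(2*π), DY (θ, x) ((0 : Fin n → ℝ), (1:ℝ)) * DY (θ, x) (ω, (0:ℝ)) with hGdef
  have hMG : ∀ t, M t = G (fun i => ω i * t) := by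
    intro t
    apply intervalIntegral.integral_congr
    intro x _
    have hcy : HasDerivAt (fun z => Y (fun i => ω i * t) z)
        (DY ((fun i => ω i * t), x) ((0 : Fin n → ℝ), (1:ℝ))) x :=
      (hYfd _).comp_hasDerivAt x ((hasDerivAt_const x _).prodMk (hasDerivAt_id x))
    have hey : (fun z => Y (fun i => ω i * t) z) = fun z => y t z :=
      funext fun z => (hrep t z).symm
    rw [hey] at hcy
    have hB : DF (t,x) (0,1) = DY ((fun i => ω i * t), x) ((0 : Fin n → ℝ), (1:ℝ)) :=
      (hyx t x).unique hcy
    have hcurve : HasDerivAt (fun s : ℝ => (((fun i => ω i * s) : Fin n → ℝ), x))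
        ((ω, (0:ℝ)) : (Fin n → ℝ) × ℝ) t := by
      apply HasDerivAt.prodMk
      · exact hasDerivAt_pi.mpr fun i => by simpa using (hasDerivAt_id t).const_mul (ω i)
      · exact hasDerivAt_const t x
    have hcty : HasDerivAt (fun s => Y (fun i => ω i * s) x)
        (DY ((fun i => ω i * t), x) (ω, (0:ℝ))) t :=
      (hYfd _).comp_hasDerivAt t hcurve
    have hety : (fun s => Y (fun i => ω i * s) x) = fun s => y s x :=
      funext fun s => (hrep s x).symm
    rw [hety] at hcty
    have hA : DF (t,x) (1,0) = DY ((fun i => ω i * t), x) (ω, (0:ℝ)) :=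
      (hyt t x).unique hcty
    show DF (t, x) (0,1) * DF (t,x) (1,0)
      = DY ((fun i => ω i * t), x) ((0 : Fin n → ℝ), (1:ℝ))
        * DY ((fun i => ω i * t), x) (ω, (0:ℝ))
    rw [hB, hA]
  have hGc : Continuous G := by
    apply intervalIntegral.continuous_parametric_intervalIntegral_of_continuous'
      (f := fun (θ : Fin n → ℝ) (x : ℝ) =>
        DY (θ, x) ((0 : Fin n → ℝ), (1:ℝ)) * DY (θ, x) (ω, (0:ℝ)))
    exact (hDYc.clm_apply continuous_const).mul (hDYc.clm_apply continuous_const)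
  have hGper1 : ∀ θ i, G (Function.update θ i (θ i + 2*π)) = G θ := by
    intro θ i
    have hvec : ∀ θ' : Fin n → ℝ, Function.update θ' i (θ' i + 2*π) = θ' + Pi.single i (2*π) := by
      intro θ'
      funext j
      by_cases hj : j = i
      · subst hj; simp
      · simp [Function.update_of_ne hj, Pi.single_eq_of_ne hj]
    have hDper : ∀ (P : (Fin n → ℝ) × ℝ) (v : (Fin n → ℝ) × ℝ),
        DY (P + ((Pi.single i (2*π) : Fin n → ℝ), (0:ℝ))) v = DY P v := by
      intro P v
      have hshift : HasFDerivAt (fun P' : (Fin n → ℝ) × ℝ => P' + (Pi.single i (2*π), (0:ℝ)))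
          (ContinuousLinearMap.id ℝ _) P := (hasFDerivAt_id P).add_const _
      have h1 := (hYfd (P + (Pi.single i (2*π), (0:ℝ)))).comp P hshift
      have h2 : ((fun P : (Fin n → ℝ) × ℝ => Y P.1 P.2)
          ∘ (fun P' : (Fin n → ℝ) × ℝ => P' + (Pi.single i (2*π), (0:ℝ))))
          = fun P : (Fin n → ℝ) × ℝ => Y P.1 P.2 := by
        funext P'
        show Y (P'.1 + Pi.single i (2*π)) (P'.2 + 0) = Y P'.1 P'.2
        rw [add_zero, ← hvec P'.1]
        exact hYper P'.1 P'.2 i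
      rw [h2] at h1
      have h3 := (hYfd P).unique h1
      rw [h3]
      simp
    have hpt : ∀ x : ℝ, ((Function.update θ i (θ i + 2*π) : Fin n → ℝ), x)
        = ((θ, x) : (Fin n → ℝ) × ℝ) + (Pi.single i (2*π), (0:ℝ)) := by
      intro x
      have hred : ((θ, x) : (Fin n → ℝ) × ℝ) + (Pi.single i (2*π), (0:ℝ))
          = (θ + Pi.single i (2*π), x + 0) := rfl
      rw [hred, add_zero, hvec θ]
    simp only [hGdef]
    apply intervalIntegral.integral_congr
    intro x _
    show DY (Function.update θ i (θ i + 2*π), x) ((0 : Fin n → ℝ), (1:ℝ))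
        * DY (Function.update θ i (θ i + 2*π), x) (ω, (0:ℝ))
      = DY (θ, x) ((0 : Fin n → ℝ), (1:ℝ)) * DY (θ, x) (ω, (0:ℝ))
    rw [hpt x]
    simp only [hDper]
  have hGlat : ∀ (k : Fin n → ℤ) (θ : Fin n → ℝ),
      G (fun i => θ i + (k i : ℝ) * (2*π)) = G θ := fun k θ =>
    aux_lattice n G (2*π) hGper1 k θ
  have hrecM : ∀ t : ℝ, ∀ ε > 0, ∀ T : ℝ, ∃ τ : ℝ, T ≤ τ ∧ M (t + τ) < M t + ε := by
    intro t ε hε T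
    obtain ⟨δ, hδ, hδ'⟩ :=
      Metric.continuousAt_iff.mp (hGc.continuousAt (x := fun i => ω i * t)) ε hε
    obtain ⟨τ, hτT, k, hk⟩ := aux_recurrence n ω δ hδ T
    refine ⟨τ, hτT, ?_⟩
    have h2 : (fun i => ω i * (t + τ))
        = fun i => ((fun j => ω j * t + (ω j * τ - (k j : ℝ) * (2*π))) i) + (k i : ℝ) * (2*π) := by
      funext i; ring
    have h3 : G (fun i => ω i * (t + τ))
        = G (fun j => ω j * t + (ω j * τ - (k j : ℝ) * (2*π))) := by
      rw [h2]; exact hGlat k _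
    have h4 : dist (fun j => ω j * t + (ω j * τ - (k j : ℝ) * (2*π))) (fun i => ω i * t) < δ := by
      rw [dist_pi_lt_iff hδ]
      intro i
      rw [Real.dist_eq]
      simpa using hk i
    have h5 := hδ' h4
    rw [Real.dist_eq] at h5
    have h6 := (abs_lt.mp h5).2
    rw [hMG (t + τ), hMG t, h3]
    linarith
  have hMconst : ∀ s t' : ℝ, M s = M t' := aux_const_of_monotone_recurrent M hMmono hrecM
  have hM0 : ∀ t, (∫ x in (0:ℝ)..(2*π), DF (t,x) (0,1) ^ (p+1)) = 0 := by
    intro t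
    have h1 : M = fun _ => M 0 := funext fun s => hMconst s 0
    have h2 := (hMd t).deriv
    rw [hIeq t] at h2
    rw [← h2, h1]
    simp
  have hB0 : ∀ t x, DF (t,x) (0,1) = 0 := by
    intro t x
    have hz := aux_zero_of_periodic_integral_zero (fun x => DF (t,x) (0,1) ^ (p+1)) (2*π) hπ
      ((contBx t).pow _) (fun x => (hp.add_one).pow_nonneg _)
      (fun x => by show DF (t, x + 2*π) (0,1) ^ (p+1) = DF (t,x) (0,1) ^ (p+1); rw [hBper t x])
      (hM0 t) x
    exact (pow_eq_zero_iff (Nat.succ_ne_zero p)).mp hz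
  refine ⟨fun t => y t 0, fun t x => ?_⟩
  have hdiffx : Differentiable ℝ (fun z => y t z) := fun z => (hyx t z).differentiableAt
  have hderiv0 : ∀ z, deriv (fun z' => y t z') z = 0 := fun z => by
    rw [(hyx t z).deriv]; exact hB0 t z
  exact is_const_of_deriv_eq_zero hdiffx hderiv0 x 0
end
end

section
/- Let p be an odd positive integer and f a smooth real function. If y(t,x) is a smooth quasi-periodic solution of y_tt - y_xx = ∂_x(y^p) + f(y) on the circle, then y(t,x) = c(t) is independent of x. -/
noncomputable section
open Real

/- STATEMENT 1: odd p, smooth f; any smooth quasi-periodic solution of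
   y_tt - y_xx = ∂ₓ(y^p) + f(y) on the circle is independent of x. -/
lemma aux_return (n : ℕ) (ω : Fin n → ℝ) (N : ℝ) {δ : ℝ} (hδ : 0 < δ) :
    ∃ (T : ℝ) (k : Fin n → ℤ), N ≤ T ∧ ∀ i, |T * ω i - 2 * π * k i| < δ := by
  set Nb : ℕ := ⌈N⌉₊ + 1 with hNb
  set u : ℕ → (Fin n → ℝ) := fun m i => Int.fract ((m * Nb : ℕ) * ω i / (2 * π)) with hu
  have hS : ∀ m, u m ∈ Set.pi Set.univ (fun _ : Fin n => Set.Icc (0:ℝ) 1) := by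
    intro m i _
    exact ⟨Int.fract_nonneg _, (Int.fract_lt_one _).le⟩
  have hcomp : IsCompact (Set.pi Set.univ (fun _ : Fin n => Set.Icc (0:ℝ) 1)) :=
    isCompact_univ_pi fun _ => isCompact_Icc
  obtain ⟨L, -, φ, hφ, hconv⟩ := hcomp.tendsto_subseq hS
  have hcs : CauchySeq (u ∘ φ) := hconv.cauchySeq
  have hδ' : 0 < δ / (2 * π) := by positivity
  obtain ⟨N₀, hN₀⟩ := Metric.cauchySeq_iff.1 hcs (δ / (2 * π)) hδ'
  have hab : φ N₀ < φ (N₀ + 1) := hφ (Nat.lt_succ_self _)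
  set d : ℕ := φ (N₀ + 1) - φ N₀ with hd
  have hd1 : 1 ≤ d := by omega
  refine ⟨((d * Nb : ℕ) : ℝ), fun i =>
      ⌊(↑(φ (N₀ + 1) * Nb) * ω i / (2 * π))⌋ - ⌊(↑(φ N₀ * Nb) * ω i / (2 * π))⌋, ?_, ?_⟩
  · calc N ≤ (⌈N⌉₊ : ℝ) := Nat.le_ceil N
    _ ≤ ((Nb : ℕ) : ℝ) := by exact_mod_cast Nat.le_succ _
    _ ≤ ((d * Nb : ℕ) : ℝ) := by exact_mod_cast Nat.le_mul_of_pos_left Nb hd1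
  · intro i
    have hdist : dist (u (φ (N₀+1))) (u (φ N₀)) < δ / (2 * π) :=
      hN₀ (N₀ + 1) (Nat.le_succ _) N₀ le_rfl
    have hi : |u (φ (N₀+1)) i - u (φ N₀) i| < δ / (2 * π) := by
      have := dist_le_pi_dist (u (φ (N₀+1))) (u (φ N₀)) i
      rw [Real.dist_eq] at this
      linarith
    set b' : ℝ := ↑(φ (N₀ + 1) * Nb) * ω i / (2 * π) with hb'
    set a' : ℝ := ↑(φ N₀ * Nb) * ω i / (2 * π) with ha'
    have hcast : ((d * Nb : ℕ) : ℝ) = ↑(φ (N₀+1) * Nb) - ↑(φ N₀ * Nb) := by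
      have : (φ N₀) * Nb ≤ (φ (N₀+1)) * Nb := Nat.mul_le_mul_right _ hab.le
      push_cast [hd, Nat.sub_mul]
      rw [Nat.cast_sub this]
      push_cast
      ring
    have h2π : (0:ℝ) < 2 * π := by positivity
    have hba : 2 * π * (b' - a') = ((d * Nb : ℕ) : ℝ) * ω i := by
      rw [hb', ha', hcast]; field_simp
    have hkey : ((d * Nb : ℕ) : ℝ) * ω i - 2 * π * ((⌊b'⌋ - ⌊a'⌋ : ℤ) : ℝ)
        = 2 * π * (Int.fract b' - Int.fract a') := by
      rw [Int.fract, Int.fract, Int.cast_sub]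
      linarith
    show |((d * Nb : ℕ) : ℝ) * ω i - 2 * π * ((⌊b'⌋ - ⌊a'⌋ : ℤ) : ℝ)| < δ
    rw [hkey, abs_mul, abs_of_pos h2π]
    have hu1 : u (φ (N₀+1)) i = Int.fract b' := rfl
    have hu2 : u (φ N₀) i = Int.fract a' := rfl
    rw [hu1, hu2] at hi
    calc 2 * π * |Int.fract b' - Int.fract a'| < 2 * π * (δ / (2 * π)) := by
          exact (mul_lt_mul_iff_right₀ h2π).2 hi
    _ = δ := by field_simp

lemma aux_shift {n : ℕ} (Y : (Fin n → ℝ) → ℝ → ℝ)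
    (hYper : ∀ θ x i, Y (Function.update θ i (θ i + 2 * π)) x = Y θ x)
    (k : Fin n → ℤ) (θ : Fin n → ℝ) (x : ℝ) :
    Y (fun i => θ i + 2 * π * k i) x = Y θ x := by
  have single : ∀ (θ : Fin n → ℝ) (i : Fin n) (m : ℤ),
      Y (Function.update θ i (θ i + 2 * π * m)) x = Y θ x := by
    intro θ i m
    have hper : Function.Periodic (fun s => Y (Function.update θ i s) x) (2 * π) := by
      intro s
      have h := hYper (Function.update θ i s) x i
      simpa [Function.update_idem, Function.update_self] using h
    have := (hper.zsmul m) (θ i)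
    simpa [zsmul_eq_mul, Function.update_eq_self, mul_comm, add_comm] using this
  have main : ∀ s : Finset (Fin n), ∀ θ : Fin n → ℝ,
      Y (fun i => θ i + (if i ∈ s then 2 * π * k i else 0)) x = Y θ x := by
    intro s
    induction s using Finset.induction_on with
    | empty => intro θ; simp
    | @insert j s hj ih =>
      intro θ
      set θ' : Fin n → ℝ := fun i => θ i + (if i ∈ s then 2 * π * k i else 0) with hθ'
      have hv : (fun i => θ i + (if i ∈ insert j s then 2 * π * k i else 0))
          = Function.update θ' j (θ' j + 2 * π * k j) := by
        funext i
        by_cases hij : i = j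
        · subst hij
          simp [Function.update_self, hθ', hj]
        · simp [Function.update_of_ne hij, hθ', Finset.mem_insert, hij]
      rw [hv, single, ih]
  have := main Finset.univ θ
  simpa using this

set_option maxHeartbeats 2000000 in
theorem no_qp_solutions_dx_y_pow_odd
    (p : ℕ) (hp : Odd p) (hp0 : 0 < p)
    (f : ℝ → ℝ) (hf : ContDiff ℝ (⊤ : ℕ∞) f)
    (y : ℝ → ℝ → ℝ)
    (hy : ContDiff ℝ (⊤ : ℕ∞) (fun q : ℝ × ℝ => y q.1 q.2))
    (hqp : QuasiPeriodic y)
    (hpde : ∀ t x, dtt y t x - dxx y t x = deriv (fun z => (y t z) ^ p) x + f (y t x)) :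
    ∃ c : ℝ → ℝ, ∀ t x, y t x = c t := by
  obtain ⟨n, Y, ω, hn, hYsm, hYper, hYxper, hind, hyY⟩ := hqp
  have hyper : ∀ t, Function.Periodic (y t) (2 * π) := by
    intro t x
    rw [hyY t (x + 2 * π), hyY t x]
    exact hYxper _ x
  set F : ℝ × ℝ → ℝ := fun q => y q.1 q.2 with hF
  set A : ℝ × ℝ → (ℝ × ℝ →L[ℝ] ℝ) := fderiv ℝ F with hA
  set B := fderiv ℝ A with hB
  have hAsm : ContDiff ℝ (⊤ : ℕ∞) A := hy.fderiv_right (by simp)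
  have hAcont : Continuous A := hAsm.continuous
  have hBcont : Continuous B := (hAsm.fderiv_right (m := (⊤ : ℕ∞)) (by simp)).continuous
  have hFd : ∀ q : ℝ × ℝ, HasFDerivAt F (A q) q :=
    fun q => (hy.differentiable (by simp) q).hasFDerivAt
  have hAd : ∀ q : ℝ × ℝ, HasFDerivAt A (B q) q :=
    fun q => (hAsm.differentiable (by simp) q).hasFDerivAt
  -- slice derivatives
  have hyt : ∀ t x, HasDerivAt (fun s => y s x) (A (t, x) (1, 0)) t := by
    intro t x
    have h1 : HasDerivAt (fun s : ℝ => (s, x)) ((1 : ℝ), (0 : ℝ)) t :=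
      (hasDerivAt_id t).prodMk (hasDerivAt_const t x)
    exact (hFd (t, x)).comp_hasDerivAt t h1
  have hyx : ∀ t x, HasDerivAt (fun z => y t z) (A (t, x) (0, 1)) x := by
    intro t x
    have h1 : HasDerivAt (fun z : ℝ => (t, z)) ((0 : ℝ), (1 : ℝ)) x :=
      (hasDerivAt_const x t).prodMk (hasDerivAt_id x)
    exact (hFd (t, x)).comp_hasDerivAt x h1
  have hAt : ∀ (v : ℝ × ℝ) t x, HasDerivAt (fun s => A (s, x) v) (B (t, x) (1, 0) v) t := by
    intro v t x
    have h1 : HasDerivAt (fun s : ℝ => (s, x)) ((1 : ℝ), (0 : ℝ)) t :=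
      (hasDerivAt_id t).prodMk (hasDerivAt_const t x)
    have h2 : HasDerivAt (fun s => A (s, x)) (B (t, x) (1, 0)) t :=
      (hAd (t, x)).comp_hasDerivAt t h1
    simpa using h2.clm_apply (hasDerivAt_const t v)
  have hAx : ∀ (v : ℝ × ℝ) t x, HasDerivAt (fun z => A (t, z) v) (B (t, x) (0, 1) v) x := by
    intro v t x
    have h1 : HasDerivAt (fun z : ℝ => (t, z)) ((0 : ℝ), (1 : ℝ)) x :=
      (hasDerivAt_const x t).prodMk (hasDerivAt_id x)
    have h2 : HasDerivAt (fun z => A (t, z)) (B (t, x) (0, 1)) x :=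
      (hAd (t, x)).comp_hasDerivAt x h1
    simpa using h2.clm_apply (hasDerivAt_const x v)
  have hdt : ∀ t x, dt y t x = A (t, x) (1, 0) := fun t x => (hyt t x).deriv
  have hdx : ∀ t x, dx y t x = A (t, x) (0, 1) := fun t x => (hyx t x).deriv
  have hdtt : ∀ t x, dtt y t x = B (t, x) (1, 0) (1, 0) := by
    intro t x
    have : (fun s => deriv (fun s' => y s' x) s) = fun s => A (s, x) (1, 0) := by
      funext s; exact (hyt s x).deriv
    rw [dtt, this]
    exact (hAt (1, 0) t x).deriv
  have hdxx : ∀ t x, dxx y t x = B (t, x) (0, 1) (0, 1) := by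
    intro t x
    have : (fun z => deriv (fun z' => y t z') z) = fun z => A (t, z) (0, 1) := by
      funext z; exact (hyx t z).deriv
    rw [dxx, this]
    exact (hAx (0, 1) t x).deriv
  have hsymm : ∀ (q : ℝ × ℝ) v w, B q v w = B q w v := by
    intro q v w
    have h := (hy.contDiffAt (x := q)).isSymmSndFDerivAt (by rw [minSmoothness_of_isRCLikeNormedField]; exact WithTop.coe_le_coe.2 (le_top : (2 : ℕ∞) ≤ ⊤))
    exact h v w
  -- PDE in terms of A, B
  have hP : ∀ t x, B (t, x) (1, 0) (1, 0) =
      B (t, x) (0, 1) (0, 1) + (p : ℝ) * y t x ^ (p - 1) * A (t, x) (0, 1) + f (y t x) := by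
    intro t x
    have hpow : deriv (fun z => (y t z) ^ p) x
        = (p : ℝ) * y t x ^ (p - 1) * A (t, x) (0, 1) := ((hyx t x).pow p).deriv
    have := hpde t x
    rw [hdtt, hdxx, hpow] at this
    linarith
  -- continuity helpers
  have hcontAv : ∀ v : ℝ × ℝ, Continuous fun q : ℝ × ℝ => A q v :=
    fun v => hAcont.clm_apply continuous_const
  have hcontBvw : ∀ v w : ℝ × ℝ, Continuous fun q : ℝ × ℝ => B q v w :=
    fun v w => (hBcont.clm_apply continuous_const).clm_apply continuous_const
  have hyc : Continuous F := hy.continuous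
  have hmk : ∀ t : ℝ, Continuous fun x : ℝ => (t, x) :=
    fun t => continuous_const.prodMk continuous_id
  -- periodicity of A in x
  have hFper : ∀ q : ℝ × ℝ, F (q + ((0 : ℝ), 2 * π)) = F q := by
    intro q
    have := hyper q.1 q.2
    simpa [hF] using this
  have hAper : ∀ q : ℝ × ℝ, A (q + ((0 : ℝ), 2 * π)) = A q := by
    intro q
    have h1 : HasFDerivAt (fun r : ℝ × ℝ => r + ((0 : ℝ), 2 * π))
        (ContinuousLinearMap.id ℝ (ℝ × ℝ)) q := (hasFDerivAt_id q).add_const _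
    have h2 := (hFd (q + ((0 : ℝ), 2 * π))).comp q h1
    have h3 : (fun r : ℝ × ℝ => F (r + ((0 : ℝ), 2 * π))) = F := funext hFper
    rw [Function.comp_def, h3, ContinuousLinearMap.comp_id] at h2
    exact h2.unique (hFd q)
  have hAperx : ∀ t x (v : ℝ × ℝ), A (t, x + 2 * π) v = A (t, x) v := by
    intro t x v
    have h : ((t, x) : ℝ × ℝ) + ((0 : ℝ), 2 * π) = (t, x + 2 * π) := by
      simp [Prod.ext_iff]
    rw [← h, hAper]
  -- antiderivative of f
  set Fa : ℝ → ℝ := fun u => ∫ s in (0 : ℝ)..u, f s with hFaDef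
  have hFa : ∀ u, HasDerivAt Fa (f u) u := by
    intro u
    exact intervalIntegral.integral_hasDerivAt_right
      (hf.continuous.intervalIntegrable _ _)
      (hf.continuous.stronglyMeasurable.stronglyMeasurableAtFilter)
      hf.continuous.continuousAt
  set Φ : ℝ → ℝ → ℝ := fun t x =>
    (A (t, x) (1, 0)) ^ 2 / 2 + (A (t, x) (0, 1)) ^ 2 / 2 + Fa (y t x) with hΦdef
  have hΦd : ∀ t x, HasDerivAt (fun z => Φ t z)
      (A (t, x) (1, 0) * B (t, x) (0, 1) (1, 0) + A (t, x) (0, 1) * B (t, x) (0, 1) (0, 1)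
        + f (y t x) * A (t, x) (0, 1)) x := by
    intro t x
    have h1 := (((hAx (1, 0) t x).pow 2).div_const 2)
    have h2 := (((hAx (0, 1) t x).pow 2).div_const 2)
    have h3 : HasDerivAt (fun z => Fa (y t z)) (f (y t x) * A (t, x) (0, 1)) x :=
      (hFa (y t x)).comp x (hyx t x)
    have h := (h1.add h2).add h3
    refine h.congr_deriv ?_
    push_cast
    ring
  set H : ℝ → ℝ → ℝ := fun t x => A (t, x) (0, 1) * A (t, x) (1, 0) with hHdef
  set H' : ℝ → ℝ → ℝ := fun t x =>
    B (t, x) (1, 0) (0, 1) * A (t, x) (1, 0) + A (t, x) (0, 1) * B (t, x) (1, 0) (1, 0) with hH'def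
  have hHd : ∀ x t, HasDerivAt (fun s => H s x) (H' t x) t :=
    fun x t => (hAt (0, 1) t x).mul (hAt (1, 0) t x)
  have hHcont : Continuous fun q : ℝ × ℝ => H q.1 q.2 := (hcontAv (0, 1)).mul (hcontAv (1, 0))
  have hH'cont : Continuous fun q : ℝ × ℝ => H' q.1 q.2 :=
    ((hcontBvw (1, 0) (0, 1)).mul (hcontAv (1, 0))).add
      ((hcontAv (0, 1)).mul (hcontBvw (1, 0) (1, 0)))
  set M : ℝ → ℝ := fun t => ∫ x in (0 : ℝ)..(2 * π), H t x with hMdef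
  have hMd : ∀ t₀, HasDerivAt M (∫ x in (0 : ℝ)..(2 * π), H' t₀ x) t₀ := by
    intro t₀
    have hK : IsCompact (Set.Icc (t₀ - 1) (t₀ + 1) ×ˢ Set.uIcc (0 : ℝ) (2 * π)) :=
      isCompact_Icc.prod isCompact_uIcc
    obtain ⟨C, hC⟩ := hK.exists_bound_of_continuousOn hH'cont.continuousOn
    refine (intervalIntegral.hasDerivAt_integral_of_dominated_loc_of_deriv_le
      (F := H) (F' := H') (bound := fun _ => C) (Metric.ball_mem_nhds t₀ zero_lt_one) ?_ ?_ ?_ ?_ ?_ ?_).2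
    · exact Filter.Eventually.of_forall fun t =>
        ((hHcont.comp (hmk t)).aestronglyMeasurable)
    · exact (hHcont.comp (hmk t₀)).intervalIntegrable _ _
    · exact (hH'cont.comp (hmk t₀)).aestronglyMeasurable
    · refine Filter.Eventually.of_forall fun x hx t ht => ?_
      have hxmem : x ∈ Set.uIcc (0 : ℝ) (2 * π) := by
        rcases hx with ⟨h1, h2⟩
        exact ⟨le_of_lt h1, h2⟩
      have htmem : t ∈ Set.Icc (t₀ - 1) (t₀ + 1) := by
        rw [Metric.mem_ball, Real.dist_eq, abs_sub_lt_iff] at ht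
        constructor <;> linarith [ht.1, ht.2]
      exact hC (t, x) ⟨htmem, hxmem⟩
    · exact intervalIntegrable_const
    · exact Filter.Eventually.of_forall fun x _ t _ => hHd x t
  have hIdent : ∀ t, (∫ x in (0 : ℝ)..(2 * π), H' t x)
      = ∫ x in (0 : ℝ)..(2 * π), (p : ℝ) * y t x ^ (p - 1) * (A (t, x) (0, 1)) ^ 2 := by
    intro t
    set Df : ℝ → ℝ := fun x => A (t, x) (1, 0) * B (t, x) (0, 1) (1, 0)
      + A (t, x) (0, 1) * B (t, x) (0, 1) (0, 1) + f (y t x) * A (t, x) (0, 1) with hDfdef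
    have cA : ∀ v : ℝ × ℝ, Continuous fun x : ℝ => A (t, x) v :=
      fun v => (hcontAv v).comp (hmk t)
    have cB : ∀ v w : ℝ × ℝ, Continuous fun x : ℝ => B (t, x) v w :=
      fun v w => (hcontBvw v w).comp (hmk t)
    have cy : Continuous fun x : ℝ => y t x := hyc.comp (hmk t)
    have hDfcont : Continuous Df :=
      (((cA (1, 0)).mul (cB (0, 1) (1, 0))).add ((cA (0, 1)).mul (cB (0, 1) (0, 1)))).add
        ((hf.continuous.comp cy).mul (cA (0, 1)))
    have hQcont : Continuous fun x => (p : ℝ) * y t x ^ (p - 1) * (A (t, x) (0, 1)) ^ 2 :=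
      (continuous_const.mul (cy.pow _)).mul ((cA (0, 1)).pow 2)
    have hsplit : ∀ x, H' t x = Df x + (p : ℝ) * y t x ^ (p - 1) * (A (t, x) (0, 1)) ^ 2 := by
      intro x
      have h1 := hP t x
      have h2 := hsymm (t, x) (1, 0) (0, 1)
      simp only [hH'def, hDfdef]
      rw [h1, h2]
      ring
    have hDfint : (∫ x in (0 : ℝ)..(2 * π), Df x) = Φ t (2 * π) - Φ t 0 :=
      intervalIntegral.integral_eq_sub_of_hasDerivAt (fun x _ => hΦd t x)
        (hDfcont.intervalIntegrable _ _)
    have hΦper : Φ t (2 * π) = Φ t 0 := by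
      have e1 := hAperx t 0 (1, 0)
      have e2 := hAperx t 0 (0, 1)
      have e3 := hyper t 0
      have h0 : (0 : ℝ) + 2 * π = 2 * π := by ring
      rw [h0] at e1 e2 e3
      simp only [hΦdef, e1, e2, e3]
    calc (∫ x in (0 : ℝ)..(2 * π), H' t x)
        = ∫ x in (0 : ℝ)..(2 * π), (Df x + (p : ℝ) * y t x ^ (p - 1) * (A (t, x) (0, 1)) ^ 2) :=
          intervalIntegral.integral_congr fun x _ => hsplit x
      _ = (∫ x in (0 : ℝ)..(2 * π), Df x)
          + ∫ x in (0 : ℝ)..(2 * π), (p : ℝ) * y t x ^ (p - 1) * (A (t, x) (0, 1)) ^ 2 :=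
          intervalIntegral.integral_add (hDfcont.intervalIntegrable _ _)
            (hQcont.intervalIntegrable _ _)
      _ = _ := by rw [hDfint, hΦper]; ring
  -- Stage C: quasi-periodicity of M and constancy
  set YF : (Fin n → ℝ) × ℝ → ℝ := fun q => Y q.1 q.2 with hYFdef
  set AY := fderiv ℝ YF with hAYdef
  have hAYsm : ContDiff ℝ (⊤ : ℕ∞) AY := hYsm.fderiv_right (by simp)
  have hAYcont : Continuous AY := hAYsm.continuous
  have hAYd : ∀ q, HasFDerivAt YF (AY q) q :=
    fun q => (hYsm.differentiable (by simp) q).hasFDerivAt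
  set G : (Fin n → ℝ) → ℝ := fun θ =>
    ∫ x in (0 : ℝ)..(2 * π), AY (θ, x) (0, 1) * AY (θ, x) (ω, 0) with hGdef
  have hslice1 : ∀ (θ : Fin n → ℝ) x, HasDerivAt (fun z => YF (θ, z)) (AY (θ, x) (0, 1)) x := by
    intro θ x
    have h1 : HasDerivAt (fun z : ℝ => ((θ : Fin n → ℝ), z)) ((0 : Fin n → ℝ), (1 : ℝ)) x :=
      (hasDerivAt_const x θ).prodMk (hasDerivAt_id x)
    exact (hAYd (θ, x)).comp_hasDerivAt x h1
  have hslice2 : ∀ t x, HasDerivAt (fun s => YF ((fun i => ω i * s), x))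
      (AY ((fun i => ω i * t), x) (ω, 0)) t := by
    intro t x
    have hin : HasDerivAt (fun s : ℝ => (fun i => ω i * s)) ω t := by
      apply hasDerivAt_pi.2
      intro i
      simpa [mul_comm] using (hasDerivAt_mul_const (ω i) : HasDerivAt (fun s : ℝ => s * ω i) (ω i) t)
    have h1 : HasDerivAt (fun s : ℝ => ((fun i => ω i * s : Fin n → ℝ), x)) ((ω : Fin n → ℝ), (0 : ℝ)) t :=
      hin.prodMk (hasDerivAt_const t x)
    exact (hAYd _).comp_hasDerivAt t h1
  have hGM : ∀ t, M t = G (fun i => ω i * t) := by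
    intro t
    apply intervalIntegral.integral_congr
    intro x _
    have e1 : A (t, x) (0, 1) = AY ((fun i => ω i * t), x) (0, 1) := by
      have h2 : HasDerivAt (fun z => y t z) (AY ((fun i => ω i * t), x) (0, 1)) x := by
        have h := hslice1 (fun i => ω i * t) x
        have hfun : (fun z => YF ((fun i => ω i * t), z)) = fun z => y t z :=
          funext fun z => (hyY t z).symm
        rwa [hfun] at h
      exact (hyx t x).unique h2
    have e2 : A (t, x) (1, 0) = AY ((fun i => ω i * t), x) (ω, 0) := by
      have h2 : HasDerivAt (fun s => y s x) (AY ((fun i => ω i * t), x) (ω, 0)) t := by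
        have h := hslice2 t x
        have hfun : (fun s => YF ((fun i => ω i * s), x)) = fun s => y s x :=
          funext fun s => (hyY s x).symm
        rwa [hfun] at h
      exact (hyt t x).unique h2
    show A (t, x) (0, 1) * A (t, x) (1, 0) = _
    rw [e1, e2]
  have hGcont : Continuous G := by
    apply intervalIntegral.continuous_parametric_intervalIntegral_of_continuous'
      (f := fun (θ : Fin n → ℝ) (x : ℝ) => AY (θ, x) (0, 1) * AY (θ, x) (ω, 0))
    have h1 : Continuous fun q : (Fin n → ℝ) × ℝ => AY q (0, 1) := hAYcont.clm_apply continuous_const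
    have h2 : Continuous fun q : (Fin n → ℝ) × ℝ => AY q (ω, 0) := hAYcont.clm_apply continuous_const
    exact (h1.mul h2).comp (continuous_fst.prodMk continuous_snd)
  have hGper : ∀ (k : Fin n → ℤ) (θ : Fin n → ℝ), G (fun i => θ i + 2 * π * k i) = G θ := by
    intro k θ
    have hAYshift : ∀ q : (Fin n → ℝ) × ℝ,
        AY (q + ((fun i => 2 * π * k i), 0)) = AY q := by
      intro q
      have h1 : HasFDerivAt (fun r : (Fin n → ℝ) × ℝ => r + ((fun i => 2 * π * k i), 0))
          (ContinuousLinearMap.id ℝ ((Fin n → ℝ) × ℝ)) q := (hasFDerivAt_id q).add_const _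
      have h2 := (hAYd (q + ((fun i => 2 * π * k i), 0))).comp q h1
      have h3 : (fun r : (Fin n → ℝ) × ℝ => YF (r + ((fun i => 2 * π * k i), 0))) = YF := by
        funext r
        have := aux_shift Y hYper k r.1 r.2
        simpa [hYFdef, Pi.add_def] using this
      rw [Function.comp_def, h3, ContinuousLinearMap.comp_id] at h2
      exact h2.unique (hAYd q)
    apply intervalIntegral.integral_congr
    intro x _
    have hq : (((fun i => θ i + 2 * π * k i) : Fin n → ℝ), x)
        = ((θ, x) : (Fin n → ℝ) × ℝ) + ((fun i => 2 * π * k i), 0) := by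
      refine Prod.ext ?_ ?_
      · funext i; simp
      · simp
    show AY _ (0, 1) * AY _ (ω, 0) = AY _ (0, 1) * AY _ (ω, 0)
    rw [hq, hAYshift]
  have hM0G : M 0 = G 0 := by
    rw [hGM 0]
    congr 1
    funext i
    simp
  have hmono : Monotone M := by
    apply monotone_of_deriv_nonneg (fun t => (hMd t).differentiableAt)
    intro t
    rw [(hMd t).deriv, hIdent t]
    apply intervalIntegral.integral_nonneg (by positivity)
    intro x _
    have hev : Even (p - 1) := Nat.Odd.sub_odd hp odd_one
    have hy1 : (0 : ℝ) ≤ y t x ^ (p - 1) := hev.pow_nonneg _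
    have hp1 : (0 : ℝ) ≤ (p : ℝ) := by positivity
    exact mul_nonneg (mul_nonneg hp1 hy1) (sq_nonneg _)
  have hMconst : ∀ t, M t = M 0 := by
    intro t
    have key : ∀ ε > (0 : ℝ), |M t - M 0| ≤ ε := by
      intro ε hε
      obtain ⟨δ, hδpos, hδ⟩ := Metric.continuousAt_iff.1 hGcont.continuousAt ε hε
      obtain ⟨T, k, hT, hk⟩ := aux_return n ω (|t| + 1) hδpos
      have hnear : ∀ (S : ℝ) (k : Fin n → ℤ), (∀ i, |S * ω i - 2 * π * k i| < δ) →
          dist (M S) (G 0) < ε := by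
        intro S k hS
        rw [hGM S]
        have e : (fun i => (ω i * S - 2 * π * k i) + 2 * π * k i) = fun i => ω i * S :=
          funext fun i => by ring
        have h' := hGper k (fun i => ω i * S - 2 * π * k i)
        rw [e] at h'
        rw [h']
        apply hδ
        rw [dist_pi_lt_iff hδpos]
        intro i
        rw [Real.dist_eq]
        simpa [mul_comm, sub_zero] using hS i
      have hkneg : ∀ i, |(-T) * ω i - 2 * π * ((-k) i : ℤ)| < δ := by
        intro i
        have hki := hk i
        have e : (-T) * ω i - 2 * π * (((-k) i : ℤ) : ℝ) = -(T * ω i - 2 * π * (k i : ℤ)) := by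
          push_cast [Pi.neg_apply]
          ring
        rw [e, abs_neg]
        exact hki
      have hMT := hnear T k hk
      have hMnT := hnear (-T) (-k) hkneg
      rw [Real.dist_eq, ← hM0G] at hMT hMnT
      have h1 : M (-T) ≤ M t := hmono (by cases abs_le.1 (le_refl |t|) with
        | intro h1 h2 => linarith)
      have h2 : M t ≤ M T := hmono (by
        have := le_abs_self t
        linarith)
      rw [abs_lt] at hMT hMnT
      rw [abs_le]
      constructor <;> linarith [hMT.1, hMT.2, hMnT.1, hMnT.2]
    by_contra hne
    have hpos : 0 < |M t - M 0| := abs_pos.2 (sub_ne_zero.2 hne)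
    have := key (|M t - M 0| / 2) (by linarith)
    linarith
  -- Stage D: the nonnegative integrand vanishes identically
  have hgzero : ∀ t, (∫ x in (0 : ℝ)..(2 * π),
      (p : ℝ) * y t x ^ (p - 1) * (A (t, x) (0, 1)) ^ 2) = 0 := by
    intro t
    have h1 : deriv M t = 0 := by
      have hMfun : M = fun _ => M 0 := funext hMconst
      rw [hMfun]
      exact deriv_const _ _
    rw [← hIdent t, ← (hMd t).deriv]
    exact h1
  have hptzero : ∀ t x, y t x ^ (p - 1) * (A (t, x) (0, 1)) ^ 2 = 0 := by
    intro t x₀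
    set h : ℝ → ℝ := fun x => (p : ℝ) * y t x ^ (p - 1) * (A (t, x) (0, 1)) ^ 2 with hhdef
    have hcont : Continuous h := by
      have cy : Continuous fun x : ℝ => y t x := hyc.comp (hmk t)
      have cA : Continuous fun x : ℝ => A (t, x) (0, 1) := (hcontAv (0, 1)).comp (hmk t)
      exact (continuous_const.mul (cy.pow _)).mul (cA.pow 2)
    have hev : Even (p - 1) := Nat.Odd.sub_odd hp odd_one
    have hnonneg : ∀ x, 0 ≤ h x := by
      intro x
      have hy1 : (0 : ℝ) ≤ y t x ^ (p - 1) := hev.pow_nonneg _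
      exact mul_nonneg (mul_nonneg (by positivity) hy1) (sq_nonneg _)
    have hhper : Function.Periodic h (2 * π) := by
      intro x
      simp only [hhdef]
      rw [hyper t x, hAperx t x (0, 1)]
    suffices hz : h x₀ = 0 by
      have hp' : (p : ℝ) ≠ 0 := Nat.cast_ne_zero.2 (by omega)
      have : (p : ℝ) * (y t x₀ ^ (p - 1) * (A (t, x₀) (0, 1)) ^ 2) = 0 := by
        rw [← mul_assoc]; exact hz
      exact (mul_eq_zero.1 this).resolve_left hp'
    by_contra hne
    have hpos : 0 < h x₀ := lt_of_le_of_ne (hnonneg x₀) (Ne.symm hne)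
    obtain ⟨δ, hδpos, hδ⟩ := Metric.continuousAt_iff.1 hcont.continuousAt (h x₀ / 2) (by linarith)
    set δ' : ℝ := min δ 1 with hδ'def
    have hδ'pos : 0 < δ' := lt_min hδpos one_pos
    have hδ'le : δ' ≤ 1 := min_le_right _ _
    have hπ : (1 : ℝ) < π := by
      have := Real.pi_gt_three
      linarith
    have hiv1 : x₀ - δ' < x₀ + δ' := by linarith
    have hiv2 : x₀ + δ' ≤ x₀ - δ' + 2 * π := by linarith
    have hzero2π : (∫ x in (x₀ - δ')..(x₀ - δ' + 2 * π), h x) = 0 := by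
      rw [hhper.intervalIntegral_add_eq (x₀ - δ') 0]
      simpa using hgzero t
    have hsplit : (∫ x in (x₀ - δ')..(x₀ - δ' + 2 * π), h x)
        = (∫ x in (x₀ - δ')..(x₀ + δ'), h x) + ∫ x in (x₀ + δ')..(x₀ - δ' + 2 * π), h x :=
      (intervalIntegral.integral_add_adjacent_intervals
        (hcont.intervalIntegrable _ _) (hcont.intervalIntegrable _ _)).symm
    have hpos1 : 0 < ∫ x in (x₀ - δ')..(x₀ + δ'), h x := by
      apply intervalIntegral.intervalIntegral_pos_of_pos_on (hcont.intervalIntegrable _ _) _ hiv1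
      intro x hx
      have hxd : dist x x₀ < δ := by
        rw [Real.dist_eq, abs_lt]
        have h1 := hx.1
        have h2 := hx.2
        have : δ' ≤ δ := min_le_left _ _
        constructor <;> linarith
      have := hδ hxd
      rw [Real.dist_eq, abs_lt] at this
      linarith [this.1]
    have hpos2 : 0 ≤ ∫ x in (x₀ + δ')..(x₀ - δ' + 2 * π), h x :=
      intervalIntegral.integral_nonneg hiv2 fun x _ => hnonneg x
    rw [hsplit] at hzero2π
    linarith
  -- Stage E: conclude y is independent of x
  refine ⟨fun t => y t 0, fun t x => ?_⟩
  show y t x = y t 0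
  have hkey : ∀ z, y t z ^ (p + 1) = y t 0 ^ (p + 1) := by
    have hd : ∀ z, HasDerivAt (fun w => y t w ^ (p + 1)) 0 z := by
      intro z
      have h := (hyx t z).pow (p + 1)
      have h2 : y t z ^ p * A (t, z) (0, 1) = 0 := by
        have hsq : (y t z ^ p * A (t, z) (0, 1)) ^ 2 = 0 := by
          have hexp : (y t z ^ p * A (t, z) (0, 1)) ^ 2
              = y t z ^ (p + 1) * (y t z ^ (p - 1) * (A (t, z) (0, 1)) ^ 2) := by
            rw [mul_pow, ← pow_mul, show p * 2 = (p + 1) + (p - 1) by omega, pow_add]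
            ring
          rw [hexp, hptzero t z, mul_zero]
        exact pow_eq_zero_iff (two_ne_zero) |>.1 hsq
      have hz : ((p + 1 : ℕ) : ℝ) * y t z ^ (p + 1 - 1) * A (t, z) (0, 1) = 0 := by
        rw [Nat.add_sub_cancel, mul_assoc, h2, mul_zero]
      rwa [hz] at h
    intro z
    exact is_const_of_deriv_eq_zero (fun w => (hd w).differentiableAt) (fun w => (hd w).deriv) z 0
  have hev1 : Even (p + 1) := hp.add_one
  by_cases hc : y t 0 = 0
  · rw [hc]
    have := hkey x
    rw [hc, zero_pow (by omega)] at this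
    exact pow_eq_zero_iff (n := p + 1) (by omega) |>.1 this
  · have hne : ∀ z, y t z ≠ 0 := by
      intro z hz
      apply hc
      have := hkey z
      rw [hz, zero_pow (by omega)] at this
      exact (pow_eq_zero_iff (n := p + 1) (by omega)).1 this.symm
    have habs : |y t x| = |y t 0| := by
      have h1 : |y t x| ^ (p + 1) = |y t 0| ^ (p + 1) := by
        rw [hev1.pow_abs, hev1.pow_abs]
        exact hkey x
      exact (pow_left_inj₀ (abs_nonneg _) (abs_nonneg _) (by omega)).1 h1
    rcases abs_eq_abs.1 habs with hgood | hbad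
    · exact hgood
    · exfalso
      have hu : Continuous fun z => y t z := hyc.comp (hmk t)
      have hmem : (0 : ℝ) ∈ Set.uIcc (y t x) (y t 0) := by
        rw [Set.mem_uIcc]
        rcases lt_trichotomy (y t 0) 0 with hlt | heq | hgt
        · right; constructor <;> nlinarith [hbad]
        · exact absurd heq hc
        · left; constructor <;> nlinarith [hbad]
      obtain ⟨z, _, hz0⟩ := intermediate_value_uIcc (hu.continuousOn (s := Set.uIcc x 0)) hmem
      exact hne z hz0

end
end

section
/- Let p be an odd positive integer. If y(t,x) is a smooth quasi-periodic solution of y_tt - y_xx = (y_t)^p + f(y) on the circle (with f smooth and F a primitive of f), then y is independent of t, i.e. y(t,x) = c(x). If moreover f ≡ 0, then y is constant. -/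
noncomputable section
open Real

section
open Real ContDiff MeasureTheory intervalIntegral Set

namespace QPAux

/-- directional partial derivative -/
def pd {E : Type*} [NormedAddCommGroup E] [NormedSpace ℝ E] (v : E) (g : E → ℝ) (q : E) : ℝ :=
  fderiv ℝ g q v

variable {E : Type*} [NormedAddCommGroup E] [NormedSpace ℝ E]

lemma ContDiff.pd' {g : E → ℝ} (hg : ContDiff ℝ (⊤ : ℕ∞) g) (v : E) : ContDiff ℝ (⊤ : ℕ∞) (pd v g) :=
  (hg.fderiv_right (by simp)).clm_apply contDiff_const

lemma hasFDerivAt_pd {g : E → ℝ} (hg : ContDiff ℝ (⊤ : ℕ∞) g) (v : E) (q : E) :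
    HasFDerivAt (pd v g) ((ContinuousLinearMap.apply ℝ ℝ v).comp (fderiv ℝ (fderiv ℝ g) q)) q := by
  have h1 : HasFDerivAt (fderiv ℝ g) (fderiv ℝ (fderiv ℝ g) q) q :=
    ((hg.fderiv_right (m := 1) (by norm_cast)).differentiable one_ne_zero).differentiableAt.hasFDerivAt
  exact (ContinuousLinearMap.apply ℝ ℝ v).hasFDerivAt.comp q h1

lemma pd_comm {g : E → ℝ} (hg : ContDiff ℝ (⊤ : ℕ∞) g) (v w : E) (q : E) :
    pd w (pd v g) q = pd v (pd w g) q := by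
  have hsym := second_derivative_symmetric (f := g) (f' := fderiv ℝ g)
    (f'' := fderiv ℝ (fderiv ℝ g) q)
    (fun y => ((hg.differentiable (by simp)) y).hasFDerivAt)
    (((hg.fderiv_right (m := 1) (by norm_cast)).differentiable one_ne_zero).differentiableAt.hasFDerivAt)
  have h1 := (hasFDerivAt_pd hg v q).fderiv
  have h2 := (hasFDerivAt_pd hg w q).fderiv
  simp only [pd, h1, h2, ContinuousLinearMap.coe_comp', Function.comp_apply,
    ContinuousLinearMap.apply_apply]
  exact hsym w v

/-- invariance of pd under a translation that leaves g invariant -/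
lemma pd_add_const {g : E → ℝ} (hg : Differentiable ℝ g) (c : E)
    (hper : ∀ z, g (z + c) = g z) (v q : E) : pd v g (q + c) = pd v g q := by
  have h : HasFDerivAt (fun z => g (z + c)) (fderiv ℝ g (q + c)) q := by
    have := (hg (q + c)).hasFDerivAt.comp q ((hasFDerivAt_id q).add_const c)
    rw [ContinuousLinearMap.comp_id] at this
    exact this
  have h2 : (fun z => g (z + c)) = g := funext hper
  rw [h2] at h
  simp only [pd, (hg q).hasFDerivAt.unique h]

/-- slice derivative in first coordinate -/
lemma hasDerivAt_slice1 {g : ℝ × ℝ → ℝ} (hg : ContDiff ℝ (⊤ : ℕ∞) g) (t x : ℝ) :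
    HasDerivAt (fun s => g (s, x)) (pd ((1:ℝ),(0:ℝ)) g (t, x)) t := by
  have h1 : HasDerivAt (fun s : ℝ => (s, x)) ((1:ℝ),(0:ℝ)) t :=
    (hasDerivAt_id t).prodMk (hasDerivAt_const t x)
  exact ((hg.differentiable (by simp)).differentiableAt.hasFDerivAt).comp_hasDerivAt t h1

/-- slice derivative in second coordinate -/
lemma hasDerivAt_slice2 {g : ℝ × ℝ → ℝ} (hg : ContDiff ℝ (⊤ : ℕ∞) g) (t x : ℝ) :
    HasDerivAt (fun z => g (t, z)) (pd ((0:ℝ),(1:ℝ)) g (t, x)) x := by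
  have h1 : HasDerivAt (fun z : ℝ => (t, z)) ((0:ℝ),(1:ℝ)) x :=
    (hasDerivAt_const x t).prodMk (hasDerivAt_id x)
  exact ((hg.differentiable (by simp)).differentiableAt.hasFDerivAt).comp_hasDerivAt x h1

/-- differentiation under the interval integral for jointly continuous data -/
lemma hasDerivAt_param_integral {g g' : ℝ × ℝ → ℝ} (hg : Continuous g) (hg' : Continuous g')
    (hd : ∀ t x : ℝ, HasDerivAt (fun s => g (s, x)) (g' (t, x)) t) (a b t₀ : ℝ) :
    HasDerivAt (fun t => ∫ x in a..b, g (t, x)) (∫ x in a..b, g' (t₀, x)) t₀ := by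
  have hK : IsCompact ((Metric.closedBall t₀ 1) ×ˢ (Set.uIcc a b)) :=
    (isCompact_closedBall t₀ 1).prod isCompact_uIcc
  obtain ⟨C, hC⟩ := hK.exists_bound_of_continuousOn hg'.continuousOn
  have main := intervalIntegral.hasDerivAt_integral_of_dominated_loc_of_deriv_le
    (F := fun t x => g (t, x)) (F' := fun t x => g' (t, x)) (x₀ := t₀)
    (bound := fun _ => C) (a := a) (b := b) (s := Metric.ball t₀ 1) (μ := volume) (Metric.ball_mem_nhds t₀ one_pos)
    (Filter.Eventually.of_forall fun t =>
      (hg.comp (continuous_const.prodMk continuous_id)).aestronglyMeasurable)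
    ((hg.comp (continuous_const.prodMk continuous_id)).intervalIntegrable a b)
    (hg'.comp (continuous_const.prodMk continuous_id)).aestronglyMeasurable
    (Filter.Eventually.of_forall fun x hx t ht => hC (t, x)
      ⟨Metric.ball_subset_closedBall ht, uIoc_subset_uIcc hx⟩)
    (intervalIntegrable_const)
    (Filter.Eventually.of_forall fun x _ t _ => hd t x)
  exact main.2

/-- a continuous nonneg function on ℝ, periodic with period `c > 0`, whose integral over
one period vanishes, is identically zero -/
lemma eq_zero_of_integral_zero {h : ℝ → ℝ} {c : ℝ} (hc : 0 < c) (hcont : Continuous h)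
    (hnn : ∀ x, 0 ≤ h x) (hper : Function.Periodic h c)
    (hint : ∫ x in (0:ℝ)..c, h x = 0) (x₀ : ℝ) : h x₀ = 0 := by
  by_contra hne
  have hpos : 0 < h x₀ := lt_of_le_of_ne (hnn x₀) (Ne.symm hne)
  -- find a representative with positive value in Ioc 0 c
  obtain ⟨x₁, hx₁, hval⟩ := hper.exists_mem_Ico₀ hc x₀
  have hx₁pos : 0 < h x₁ := hval ▸ hpos
  -- a point in Ioc 0 c with positive value
  obtain ⟨x₂, hx₂mem, hx₂pos⟩ : ∃ x₂ ∈ Set.Ioc (0:ℝ) c, 0 < h x₂ := by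
    rcases eq_or_lt_of_le hx₁.1 with h0 | h0
    · exact ⟨c, ⟨hc, le_rfl⟩, by rwa [← h0, ← hper.eq] at hx₁pos⟩
    · exact ⟨x₁, ⟨h0, hx₁.2.le⟩, hx₁pos⟩
  -- ae-zero on Ioc 0 c
  have hae : ∀ᵐ x ∂(volume : Measure ℝ), x ∈ Set.Ioc (0:ℝ) c → h x = 0 := by
    have := (intervalIntegral.integral_eq_zero_iff_of_le_of_nonneg_ae hc.le
      (Filter.Eventually.of_forall fun x => hnn x) (hcont.intervalIntegrable 0 c)).mp hint
    rw [Filter.EventuallyEq, ae_restrict_iff' measurableSet_Ioc] at this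
    simpa using this
  -- but h > 0 on a nonempty open subset of Ioo 0 c
  have hopen : IsOpen {x | 0 < h x} := isOpen_lt continuous_const hcont
  have hxcl : x₂ ∈ closure (Set.Ioo (0:ℝ) c) := by
    rw [closure_Ioo hc.ne]
    exact ⟨hx₂mem.1.le, hx₂mem.2⟩
  obtain ⟨x₃, hx₃o, hx₃i⟩ := mem_closure_iff.mp hxcl _ hopen hx₂pos
  set s : Set ℝ := {x | 0 < h x} ∩ Set.Ioo 0 c
  have hsopen : IsOpen s := hopen.inter isOpen_Ioo
  have hsne : s.Nonempty := ⟨x₃, hx₃o, hx₃i⟩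
  have hspos : 0 < volume s := hsopen.measure_pos volume hsne
  have hs0 : volume s = 0 := by
    refine measure_mono_null ?_ (ae_iff.mp hae)
    rintro x ⟨hx1, hx2⟩
    simp only [Set.mem_setOf_eq]
    intro hcontra
    exact absurd (hcontra ⟨hx2.1, hx2.2.le⟩) (ne_of_gt hx1)
  exact absurd hs0 (ne_of_gt hspos)

end QPAux
end


open QPAux MeasureTheory intervalIntegral Set Filter in
/- STATEMENT 2: odd p; any smooth quasi-periodic solution of
   y_tt - y_xx = (y_t)^p + f(y) is independent of t; if f ≡ 0 it is constant. -/
theorem no_qp_solutions_yt_pow_odd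
    (p : ℕ) (hp : Odd p) (hp0 : 0 < p)
    (f : ℝ → ℝ) (hf : ContDiff ℝ (⊤ : ℕ∞) f)
    (y : ℝ → ℝ → ℝ)
    (hy : ContDiff ℝ (⊤ : ℕ∞) (fun q : ℝ × ℝ => y q.1 q.2))
    (hqp : QuasiPeriodic y)
    (hpde : ∀ t x, dtt y t x - dxx y t x = (dt y t x) ^ p + f (y t x)) :
    (∃ c : ℝ → ℝ, ∀ t x, y t x = c x) ∧
      ((∀ s, f s = 0) → ∃ C : ℝ, ∀ t x, y t x = C) := by
  obtain ⟨n, Y, ω, hn, hY, hYper, hYx, hind, hrep⟩ := hqp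
  set u : ℝ × ℝ → ℝ := fun q => y q.1 q.2 with hu_def
  set uY : (Fin n → ℝ) × ℝ → ℝ := fun z => Y z.1 z.2 with huY_def
  have hYdiff : Differentiable ℝ uY := hY.differentiable (by simp)
  -- the linear substitution (t,x) ↦ (ωt, x)
  set Φ : (ℝ × ℝ) →L[ℝ] (Fin n → ℝ) × ℝ :=
    ((ContinuousLinearMap.pi fun i => ω i • ContinuousLinearMap.id ℝ ℝ).comp
      (ContinuousLinearMap.fst ℝ ℝ ℝ)).prod (ContinuousLinearMap.snd ℝ ℝ ℝ) with hΦ_def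
  have hΦ : ∀ q : ℝ × ℝ, Φ q = ((fun i => ω i * q.1), q.2) := fun q => rfl
  have hu_comp : ∀ q : ℝ × ℝ, u q = uY (Φ q) := by
    intro q; rw [hΦ]; exact hrep q.1 q.2
  -- partial derivative notation
  set A : ℝ × ℝ → ℝ := pd ((1:ℝ), (0:ℝ)) u with hA_def
  set B : ℝ × ℝ → ℝ := pd ((0:ℝ), (1:ℝ)) u with hB_def
  have hAsm : ContDiff ℝ (⊤ : ℕ∞) A := QPAux.ContDiff.pd' hy _
  have hBsm : ContDiff ℝ (⊤ : ℕ∞) B := QPAux.ContDiff.pd' hy _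
  set PA : (Fin n → ℝ) × ℝ → ℝ := pd (Φ ((1:ℝ),(0:ℝ))) uY with hPA_def
  set PB : (Fin n → ℝ) × ℝ → ℝ := pd (Φ ((0:ℝ),(1:ℝ))) uY with hPB_def
  have hPAsm : ContDiff ℝ (⊤ : ℕ∞) PA := QPAux.ContDiff.pd' hY _
  have hPBsm : ContDiff ℝ (⊤ : ℕ∞) PB := QPAux.ContDiff.pd' hY _
  -- chain rule: A = PA ∘ Φ, B = PB ∘ Φ
  have hfd : ∀ q : ℝ × ℝ, fderiv ℝ u q = (fderiv ℝ uY (Φ q)).comp (Φ : (ℝ×ℝ) →L[ℝ] _) := by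
    intro q
    have h1 : u = uY ∘ (Φ : (ℝ×ℝ) → _) := funext hu_comp
    rw [h1, fderiv_comp q (hYdiff (Φ q)) Φ.differentiableAt, Φ.fderiv]
  have hArel : ∀ q : ℝ × ℝ, A q = PA (Φ q) := by
    intro q; simp only [hA_def, hPA_def, pd, hfd q]; rfl
  have hBrel : ∀ q : ℝ × ℝ, B q = PB (Φ q) := by
    intro q; simp only [hB_def, hPB_def, pd, hfd q]; rfl
  -- bridges to dt/dx/dtt/dxx
  have hdt : ∀ t x, dt y t x = A (t, x) := fun t x => (hasDerivAt_slice1 hy t x).deriv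
  have hdx : ∀ t x, dx y t x = B (t, x) := fun t x => (hasDerivAt_slice2 hy t x).deriv
  have hdtt : ∀ t x, dtt y t x = pd ((1:ℝ),(0:ℝ)) A (t, x) := by
    intro t x
    have h1 : (fun s => deriv (fun s' => y s' x) s) = fun s => A (s, x) :=
      funext fun s => (hasDerivAt_slice1 hy s x).deriv
    rw [dtt, h1]
    exact (hasDerivAt_slice1 hAsm t x).deriv
  have hdxx : ∀ t x, dxx y t x = pd ((0:ℝ),(1:ℝ)) B (t, x) := by
    intro t x
    have h1 : (fun z => deriv (fun z' => y t z') z) = fun z => B (t, z) :=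
      funext fun z => (hasDerivAt_slice2 hy t z).deriv
    rw [dxx, h1]
    exact (hasDerivAt_slice2 hBsm t x).deriv
  -- PDE in terms of A, B
  have hpde' : ∀ q : ℝ × ℝ,
      pd ((1:ℝ),(0:ℝ)) A q - pd ((0:ℝ),(1:ℝ)) B q = A q ^ p + f (u q) := by
    rintro ⟨t, x⟩
    have h := hpde t x
    rwa [hdtt, hdxx, hdt] at h
  have hsymAB : ∀ q : ℝ × ℝ, pd ((1:ℝ),(0:ℝ)) B q = pd ((0:ℝ),(1:ℝ)) A q :=
    fun q => pd_comm hy _ _ q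
  -- primitive of f
  set Fprim : ℝ → ℝ := fun s => ∫ τ in (0:ℝ)..s, f τ with hFprim_def
  have hFp : ∀ s : ℝ, HasDerivAt Fprim (f s) s :=
    fun s => (hf.continuous.integral_hasStrictDerivAt 0 s).hasDerivAt
  have hFc : Continuous Fprim :=
    (Differentiable.continuous (fun s => (hFp s).differentiableAt))
  -- energy densities
  set Edens : (Fin n → ℝ) × ℝ → ℝ := fun z => PA z ^ 2 / 2 + PB z ^ 2 / 2 - Fprim (uY z)
    with hE_def
  set e : ℝ × ℝ → ℝ := fun q => A q ^ 2 / 2 + B q ^ 2 / 2 - Fprim (u q) with he_def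
  have hEcont : Continuous Edens := by
    exact ((hPAsm.continuous.pow 2).div_const 2).add
      (((hPBsm.continuous.pow 2).div_const 2)) |>.sub (hFc.comp (hY.continuous))
  have he_cont : Continuous e := by
    exact ((hAsm.continuous.pow 2).div_const 2).add
      (((hBsm.continuous.pow 2).div_const 2)) |>.sub (hFc.comp (hy.continuous))
  have he_rel : ∀ q : ℝ × ℝ, e q = Edens (Φ q) := by
    intro q; simp only [he_def, hE_def, hArel q, hBrel q, hu_comp q]
  -- time derivative of the energy density
  set e' : ℝ × ℝ → ℝ := fun q =>
    A q * pd ((1:ℝ),(0:ℝ)) A q + B q * pd ((1:ℝ),(0:ℝ)) B q - f (u q) * A q with he'_def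
  have he'_cont : Continuous e' := by
    exact ((hAsm.continuous.mul (QPAux.ContDiff.pd' hAsm _).continuous).add
      (hBsm.continuous.mul (QPAux.ContDiff.pd' hBsm _).continuous)).sub
      ((hf.continuous.comp hy.continuous).mul hAsm.continuous)
  have h_slice : ∀ t x : ℝ, HasDerivAt (fun s => e (s, x)) (e' (t, x)) t := by
    intro t x
    have hA := hasDerivAt_slice1 hAsm t x
    have hB := hasDerivAt_slice1 hBsm t x
    have hu1 : HasDerivAt (fun s => u (s, x)) (A (t, x)) t := hasDerivAt_slice1 hy t x
    have hFu : HasDerivAt (fun s => Fprim (u (s, x))) (f (u (t, x)) * A (t, x)) t :=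
      by have := (hFp (u (t, x))).comp t hu1; exact this
    have h := (((hA.pow 2).div_const 2).add ((hB.pow 2).div_const 2)).sub hFu
    refine h.congr_deriv ?_
    simp only [he'_def, pow_one, Nat.cast_ofNat]
    ring
  -- the energy
  set H : ℝ → ℝ := fun t => ∫ x in (0:ℝ)..(2*π), e (t, x) with hH_def
  have hH : ∀ t, HasDerivAt H (∫ x in (0:ℝ)..(2*π), e' (t, x)) t :=
    fun t => hasDerivAt_param_integral he_cont he'_cont h_slice 0 (2*π) t
  -- periodicity in x
  have hperx : ∀ z : (Fin n → ℝ) × ℝ, uY (z + ((0 : Fin n → ℝ), 2*π)) = uY z := by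
    intro z
    show Y (z.1 + 0) (z.2 + 2*π) = Y z.1 z.2
    rw [add_zero]
    exact hYx z.1 z.2
  have hpair : ∀ t x : ℝ, ((t, x + 2*π) : ℝ × ℝ) = (t, x) + (0, 2*π) := by
    intro t x; ext <;> simp
  have hΦpair : ∀ t x : ℝ, Φ (t, x + 2*π) = Φ (t, x) + ((0 : Fin n → ℝ), 2*π) := by
    intro t x
    rw [hpair, map_add]
    congr 1
    rw [hΦ]
    ext i <;> simp
  have hAx : ∀ t x, A (t, x + 2*π) = A (t, x) := by
    intro t x
    rw [hArel, hArel, hΦpair]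
    exact pd_add_const hYdiff _ hperx _ _
  have hBx : ∀ t x, B (t, x + 2*π) = B (t, x) := by
    intro t x
    rw [hBrel, hBrel, hΦpair]
    exact pd_add_const hYdiff _ hperx _ _
  -- rewrite H' as the integral of A^(p+1)
  set I : ℝ → ℝ := fun t => ∫ x in (0:ℝ)..(2*π), A (t, x) ^ (p + 1) with hI_def
  have hkey : ∀ t, (∫ x in (0:ℝ)..(2*π), e' (t, x)) = I t := by
    intro t
    set D : ℝ × ℝ → ℝ := fun q => pd ((0:ℝ),(1:ℝ)) A q * B q + A q * pd ((0:ℝ),(1:ℝ)) B q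
      with hD_def
    have hDcont : Continuous D :=
      (((QPAux.ContDiff.pd' hAsm _).continuous.mul hBsm.continuous).add
        (hAsm.continuous.mul (QPAux.ContDiff.pd' hBsm _).continuous))
    have hsplit : ∀ x : ℝ, e' (t, x) = A (t, x) ^ (p + 1) + D (t, x) := by
      intro x
      have h1 := hpde' (t, x)
      have h2 := hsymAB (t, x)
      simp only [he'_def, hD_def]
      linear_combination A (t, x) * h1 + B (t, x) * h2
    have hizero : (∫ x in (0:ℝ)..(2*π), D (t, x)) = 0 := by
      have hAB : ∀ x ∈ Set.uIcc (0:ℝ) (2*π),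
          HasDerivAt (fun z => A (t, z) * B (t, z)) (D (t, x)) x := by
        intro x _
        exact (hasDerivAt_slice2 hAsm t x).mul (hasDerivAt_slice2 hBsm t x)
      rw [intervalIntegral.integral_eq_sub_of_hasDerivAt hAB
        ((hDcont.comp (continuous_const.prodMk continuous_id)).intervalIntegrable _ _)]
      have := hAx t 0
      have := hBx t 0
      simp only [zero_add] at *
      rw [show (2*π : ℝ) = 0 + 2*π by ring, hAx, hBx]
      ring
    calc (∫ x in (0:ℝ)..(2*π), e' (t, x))
        = ∫ x in (0:ℝ)..(2*π), (A (t, x) ^ (p + 1) + D (t, x)) := by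
          exact intervalIntegral.integral_congr (fun x _ => hsplit x)
      _ = (∫ x in (0:ℝ)..(2*π), A (t, x) ^ (p + 1)) + ∫ x in (0:ℝ)..(2*π), D (t, x) := by
          exact intervalIntegral.integral_add
            (((hAsm.continuous.pow _).comp
              (continuous_const.prodMk continuous_id)).intervalIntegrable _ _)
            ((hDcont.comp (continuous_const.prodMk continuous_id)).intervalIntegrable _ _)
      _ = I t := by rw [hizero, add_zero]
  have hH' : ∀ t, HasDerivAt H (I t) t := fun t => hkey t ▸ hH t
  -- H is monotone
  have hInonneg : ∀ t, 0 ≤ I t := by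
    intro t
    apply intervalIntegral.integral_nonneg (by positivity)
    intro x _
    exact (hp.add_one).pow_nonneg _
  have hmono : Monotone H := by
    apply monotone_of_deriv_nonneg (fun t => (hH' t).differentiableAt)
    intro t
    rw [(hH' t).deriv]
    exact hInonneg t
  -- multi-periodicity of Y
  have hYint : ∀ (k : ℤ) (θ : Fin n → ℝ) (i : Fin n) (x : ℝ),
      Y (Function.update θ i (θ i + 2*π*k)) x = Y θ x := by
    intro k
    induction k using Int.induction_on with
    | zero => intro θ i x; norm_num
    | succ k ih =>
      intro θ i x
      have h1 : Function.update θ i (θ i + 2*π*((k:ℤ)+1 : ℤ)) =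
          Function.update (Function.update θ i (θ i + 2*π*(k:ℤ))) i
            ((Function.update θ i (θ i + 2*π*(k:ℤ))) i + 2 * π) := by
        rw [Function.update_self, Function.update_idem]
        push_cast
        ring_nf
      rw [h1, hYper, ih]
    | pred k ih =>
      intro θ i x
      have h1 : Function.update θ i (θ i + 2*π*(-(k:ℤ) : ℤ)) =
          Function.update (Function.update θ i (θ i + 2*π*(-(k:ℤ)-1 : ℤ))) i
            ((Function.update θ i (θ i + 2*π*(-(k:ℤ)-1 : ℤ))) i + 2 * π) := by
        rw [Function.update_self, Function.update_idem]
        push_cast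
        ring_nf
      have h2 := ih θ i x
      rw [h1, hYper] at h2
      convert h2 using 5
  have hYmulti : ∀ (m : Fin n → ℤ) (θ : Fin n → ℝ) (x : ℝ),
      Y (fun i => θ i + 2*π*(m i : ℝ)) x = Y θ x := by
    intro m
    have haux : ∀ s : Finset (Fin n), ∀ θ x,
        Y (fun i => θ i + if i ∈ s then 2*π*(m i : ℝ) else 0) x = Y θ x := by
      intro s
      induction s using Finset.induction_on with
      | empty => intro θ x; simp
      | @insert j s hj ih =>
        intro θ x
        have key : (fun i => θ i + if i ∈ insert j s then 2*π*(m i : ℝ) else 0)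
            = Function.update (fun i => θ i + if i ∈ s then 2*π*(m i : ℝ) else 0) j
              ((fun i => θ i + if i ∈ s then 2*π*(m i : ℝ) else 0) j + 2*π*(m j : ℝ)) := by
          funext i
          rcases eq_or_ne i j with rfl | hne
          · simp [Function.update_self, hj]
          · simp [Function.update_of_ne hne, Finset.mem_insert, hne]
        rw [key]
        have := hYint (m j) (fun i => θ i + if i ∈ s then 2*π*(m i : ℝ) else 0) j x
        rw [this, ih]
    intro θ x
    have := haux Finset.univ θ x
    simpa using this
  -- translation invariance of the energy density in the torus directions
  have huYc : ∀ (m : Fin n → ℤ) (z : (Fin n → ℝ) × ℝ),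
      uY (z + ((fun i => 2*π*(m i : ℝ)), (0:ℝ))) = uY z := by
    intro m z
    show Y (z.1 + fun i => 2*π*(m i : ℝ)) (z.2 + 0) = Y z.1 z.2
    rw [add_zero]
    exact hYmulti m z.1 z.2
  have hEc : ∀ (m : Fin n → ℤ) (z : (Fin n → ℝ) × ℝ),
      Edens (z + ((fun i => 2*π*(m i : ℝ)), (0:ℝ))) = Edens z := by
    intro m z
    simp only [hE_def, hPA_def, hPB_def]
    rw [pd_add_const hYdiff _ (huYc m) _ z, pd_add_const hYdiff _ (huYc m) _ z, huYc m z]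
  -- the energy as a function on the torus
  set Hfun : (Fin n → ℝ) → ℝ := fun θ => ∫ x in (0:ℝ)..(2*π), Edens (θ, x) with hHfun_def
  have hHfun_cont : Continuous Hfun := by
    have : Continuous (Function.uncurry fun (θ : Fin n → ℝ) (x : ℝ) => Edens (θ, x)) :=
      hEcont.comp (continuous_fst.prodMk continuous_snd)
    exact continuous_parametric_intervalIntegral_of_continuous' (μ := volume) this 0 (2*π)
  have hHfun_per : ∀ (m : Fin n → ℤ) (θ : Fin n → ℝ),
      Hfun (fun i => θ i + 2*π*(m i : ℝ)) = Hfun θ := by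
    intro m θ
    simp only [hHfun_def]
    apply intervalIntegral.integral_congr
    intro x _
    have hzz : (((fun i => θ i + 2*π*(m i : ℝ)) : Fin n → ℝ), x)
        = ((θ, x) : (Fin n → ℝ) × ℝ) + ((fun i => 2*π*(m i : ℝ)), (0:ℝ)) := by
      refine Prod.ext rfl ?_
      simp
    show Edens ((fun i => θ i + 2*π*(m i : ℝ)), x) = Edens (θ, x)
    rw [hzz, hEc m]
  set φf : ℝ → (Fin n → ℝ) := fun t => fun i => ω i * t with hφf_def
  have hHF : ∀ t, H t = Hfun (φf t) := by
    intro t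
    simp only [hH_def, hHfun_def]
    apply intervalIntegral.integral_congr
    intro x _
    show e (t, x) = Edens (φf t, x)
    rw [he_rel (t, x), hΦ, hφf_def]
  -- representatives in [0, 2π]^n
  set rr : ℝ → (Fin n → ℝ) := fun t i => ω i * t - 2*π*(⌊ω i * t / (2*π)⌋ : ℝ) with hrr_def
  have hrK : ∀ t, rr t ∈ Set.Icc (0 : Fin n → ℝ) (fun _ => 2*π) := by
    intro t
    constructor <;> intro i
    · have := Int.sub_floor_div_mul_nonneg (ω i * t) Real.two_pi_pos
      simpa [hrr_def, mul_comm] using this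
    · have := (Int.sub_floor_div_mul_lt (ω i * t) Real.two_pi_pos).le
      simpa [hrr_def, mul_comm] using this
  have hHr : ∀ t, Hfun (φf t) = Hfun (rr t) := by
    intro t
    have : φf t = fun i => rr t i + 2*π*((⌊ω i * t / (2*π)⌋ : ℤ) : ℝ) := by
      funext i; simp [hrr_def, hφf_def]
    rw [this]
    exact hHfun_per (fun i => ⌊ω i * t / (2*π)⌋) (rr t)
  -- H is bounded above
  have hbdd : BddAbove (Set.range H) := by
    obtain ⟨C, hC⟩ := (isCompact_Icc (a := (0 : Fin n → ℝ)) (b := fun _ => 2*π)).exists_bound_of_continuousOn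
      hHfun_cont.continuousOn
    refine ⟨C, ?_⟩
    rintro _ ⟨t, rfl⟩
    rw [hHF, hHr]
    exact le_trans (le_abs_self _) (by simpa [Real.norm_eq_abs] using hC _ (hrK t))
  -- H converges to its sup
  set L : ℝ := ⨆ t, H t with hL_def
  have htend : Filter.Tendsto H Filter.atTop (nhds L) := tendsto_atTop_ciSup hmono hbdd
  -- recurrence: a subsequence of integer times whose torus positions converge
  obtain ⟨z, hzK, σ, hσ, hσtend⟩ :=
    (isCompact_Icc (a := (0 : Fin n → ℝ)) (b := fun _ => 2*π)).tendsto_subseq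
      (x := fun k : ℕ => rr k) (fun k => hrK k)
  have hφadd : ∀ s t : ℝ, φf (s + t) = φf s + φf t := by
    intro s t; funext i; simp [hφf_def]; ring
  have hshift : ∀ (t : ℝ) (k : ℕ), H (t + k) = Hfun (φf t + rr k) := by
    intro t k
    rw [hHF, hφadd]
    have : φf t + φf k = fun i => (φf t + rr k) i + 2*π*((⌊ω i * (k:ℝ) / (2*π)⌋ : ℤ) : ℝ) := by
      funext i
      simp [hφf_def, hrr_def]
      ring
    rw [this]
    exact hHfun_per _ _
  -- claim 1 : Hfun (φf t + z) = L for all t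
  have claim1 : ∀ t : ℝ, Hfun (φf t + z) = L := by
    intro t
    have h1 : Filter.Tendsto (fun j => H (t + σ j)) Filter.atTop (nhds L) := by
      apply htend.comp
      apply Filter.tendsto_atTop_add_const_left
      exact tendsto_natCast_atTop_atTop.comp hσ.tendsto_atTop
    have h2 : Filter.Tendsto (fun j => Hfun (φf t + rr (σ j))) Filter.atTop
        (nhds (Hfun (φf t + z))) := by
      apply (hHfun_cont.tendsto _).comp
      exact Filter.Tendsto.const_add _ hσtend
    have h3 : (fun j => H (t + σ j)) = fun j => Hfun (φf t + rr (σ j)) :=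
      funext fun j => hshift t (σ j)
    rw [h3] at h1
    exact tendsto_nhds_unique h2 h1
  -- claim 2 : H is constant equal to L
  have claim2 : ∀ t : ℝ, H t = L := by
    intro t
    have h1 : ∀ j : ℕ, Hfun (φf t + z - rr (σ j)) = L := by
      intro j
      have heq : φf t + z - rr (σ j) = fun i =>
          (φf (t - (σ j : ℝ)) + z) i + 2*π*((⌊ω i * ((σ j : ℕ) : ℝ) / (2*π)⌋ : ℤ) : ℝ) := by
        funext i
        simp [hφf_def, hrr_def]
        ring
      rw [heq]
      rw [hHfun_per (fun i => ⌊ω i * ((σ j : ℕ) : ℝ) / (2*π)⌋) (φf (t - (σ j : ℝ)) + z)]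
      exact claim1 _
    have h2 : Filter.Tendsto (fun j => Hfun (φf t + z - rr (σ j))) Filter.atTop
        (nhds (Hfun (φf t))) := by
      have hlim : Filter.Tendsto (fun j => φf t + z - rr (σ j)) Filter.atTop
          (nhds (φf t)) := by
        have := Filter.Tendsto.const_sub (φf t + z) hσtend
        simpa [add_sub_cancel_right] using this
      exact (hHfun_cont.tendsto _).comp hlim
    have h3 : (fun j => Hfun (φf t + z - rr (σ j))) = fun _ => L := funext h1
    rw [h3] at h2
    have := tendsto_nhds_unique h2 tendsto_const_nhds
    rw [hHF]
    exact this
  -- hence the derivative of H vanishes, so the integral of A^(p+1) is 0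
  have hI0 : ∀ t, I t = 0 := by
    intro t
    have h1 : HasDerivAt H (I t) t := hH' t
    have h2 : H = fun _ => L := funext claim2
    rw [h2] at h1
    exact h1.unique (hasDerivAt_const t L)
  -- the time derivative vanishes identically
  have zeroA : ∀ t x : ℝ, A (t, x) = 0 := by
    intro t x
    have hcont : Continuous (fun x => A (t, x) ^ (p+1)) :=
      (hAsm.continuous.comp (continuous_const.prodMk continuous_id)).pow _
    have hnn : ∀ x, 0 ≤ A (t, x) ^ (p+1) := fun x => (hp.add_one).pow_nonneg _
    have hper : Function.Periodic (fun x => A (t, x) ^ (p+1)) (2*π) := by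
      intro x; simp [hAx t x]
    have h0 := eq_zero_of_integral_zero Real.two_pi_pos hcont hnn hper (hI0 t) x
    exact pow_eq_zero_iff (Nat.succ_ne_zero p) |>.mp h0
  -- y is independent of t
  have hconst : ∀ t x : ℝ, y t x = y 0 x := by
    intro t x
    have hdiff : Differentiable ℝ (fun s => u (s, x)) :=
      fun s => (hasDerivAt_slice1 hy s x).differentiableAt
    have hzero : ∀ s, deriv (fun s => u (s, x)) s = 0 := by
      intro s
      rw [(hasDerivAt_slice1 hy s x).deriv]
      exact zeroA s x
    exact is_const_of_deriv_eq_zero hdiff hzero t 0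
  refine ⟨⟨fun x => y 0 x, hconst⟩, ?_⟩
  -- f ≡ 0 case
  intro hf0
  have hA0 : A = fun _ => (0:ℝ) := funext fun q => zeroA q.1 q.2
  have hdxx0 : ∀ x : ℝ, dxx y 0 x = 0 := by
    intro x
    have h := hpde 0 x
    rw [hdt, zeroA, hdtt, hf0] at h
    rw [hA0] at h
    simp only [pd, fderiv_const] at h
    rw [zero_pow hp0.ne'] at h
    simpa using h.symm
    -- h : 0 - dxx y 0 x = 0 + 0
  have hg1diff : Differentiable ℝ (fun x => B (0, x)) :=
    fun x => (hasDerivAt_slice2 hBsm 0 x).differentiableAt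
  have hg1zero : ∀ x : ℝ, deriv (fun x => B (0, x)) x = 0 := by
    intro x
    rw [(hasDerivAt_slice2 hBsm 0 x).deriv]
    rw [← hdxx 0 x]
    exact hdxx0 x
  have hg1const : ∀ x : ℝ, B (0, x) = B (0, 0) := by
    intro x
    exact is_const_of_deriv_eq_zero hg1diff hg1zero x 0
  set b : ℝ := B (0, 0) with hb_def
  have hyx' : ∀ x : ℝ, HasDerivAt (fun z => u (0, z)) b x := by
    intro x
    have := hasDerivAt_slice2 hy 0 x
    rwa [show pd ((0:ℝ),(1:ℝ)) u (0, x) = b from hg1const x] at this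
  have hlin : ∀ x : ℝ, y 0 x = y 0 0 + b * x := by
    intro x
    have hw : ∀ x' : ℝ, HasDerivAt (fun z => u (0, z) - b * z) 0 x' := by
      intro x'
      have h1 := (hyx' x').sub ((hasDerivAt_id x').const_mul b)
      have h1' : HasDerivAt (fun z => u (0, z) - b * z) (b - b * 1) x' := h1
      simpa using h1'
    have hconst2 : (fun z => u (0, z) - b * z) x = (fun z => u (0, z) - b * z) 0 :=
      is_const_of_deriv_eq_zero (fun x' => (hw x').differentiableAt)
        (fun x' => (hw x').deriv) x 0
    simp only [mul_zero, sub_zero] at hconst2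
    have : y 0 x - b * x = y 0 0 := hconst2
    linarith
  have hb0 : b = 0 := by
    have hper : y 0 (0 + 2*π) = y 0 0 := by
      rw [hrep, hrep]
      exact hYx _ _
    rw [hlin (0 + 2*π)] at hper
    have : b * (2*π) = 0 := by linarith [hper]
    rcases mul_eq_zero.mp this with h | h
    · exact h
    · exact absurd h (ne_of_gt Real.two_pi_pos)
  refine ⟨y 0 0, fun t x => ?_⟩
  rw [hconst t x, hlin x, hb0]
  ring
end
end

section
/- Every smooth solution y(t,x), defined for all t ∈ R, of the equation y_tt - y_xx = (y_t)^2 with x ∈ T = R/(2πZ) is constant. -/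
noncomputable section
open Real

section FJAux
open Set MeasureTheory Metric

/-- first partial derivative in the first variable -/
noncomputable def fjD1 (F : ℝ × ℝ → ℝ) : ℝ × ℝ → ℝ := fun p => fderiv ℝ F p (1, 0)
/-- first partial derivative in the second variable -/
noncomputable def fjD2 (F : ℝ × ℝ → ℝ) : ℝ × ℝ → ℝ := fun p => fderiv ℝ F p (0, 1)

lemma fjD1_contDiff {F : ℝ × ℝ → ℝ} (hF : ContDiff ℝ (⊤ : ℕ∞) F) : ContDiff ℝ (⊤ : ℕ∞) (fjD1 F) :=
  (hF.fderiv_right (by simp)).clm_apply contDiff_const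

lemma fjD2_contDiff {F : ℝ × ℝ → ℝ} (hF : ContDiff ℝ (⊤ : ℕ∞) F) : ContDiff ℝ (⊤ : ℕ∞) (fjD2 F) :=
  (hF.fderiv_right (by simp)).clm_apply contDiff_const

lemma fjD1_hasDerivAt {F : ℝ × ℝ → ℝ} (hF : Differentiable ℝ F) (t x : ℝ) :
    HasDerivAt (fun s => F (s, x)) (fjD1 F (t, x)) t := by
  have h : HasDerivAt (fun s : ℝ => (s, x)) ((1 : ℝ), (0 : ℝ)) t :=
    HasDerivAt.prodMk (hasDerivAt_id t) (hasDerivAt_const t x)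
  exact (hF (t, x)).hasFDerivAt.comp_hasDerivAt t h

lemma fjD2_hasDerivAt {F : ℝ × ℝ → ℝ} (hF : Differentiable ℝ F) (t x : ℝ) :
    HasDerivAt (fun z => F (t, z)) (fjD2 F (t, x)) x := by
  have h : HasDerivAt (fun z : ℝ => (t, z)) ((0 : ℝ), (1 : ℝ)) x :=
    HasDerivAt.prodMk (hasDerivAt_const x t) (hasDerivAt_id x)
  exact (hF (t, x)).hasFDerivAt.comp_hasDerivAt x h

lemma fj_hasDerivAt_integral (G G' : ℝ × ℝ → ℝ) (hG : Continuous G) (hG' : Continuous G')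
    (hd : ∀ t x, HasDerivAt (fun s => G (s, x)) (G' (t, x)) t) (t₀ : ℝ) :
    HasDerivAt (fun t => ∫ x in (0:ℝ)..(2 * π), G (t, x))
      (∫ x in (0:ℝ)..(2 * π), G' (t₀, x)) t₀ := by
  obtain ⟨C, hC⟩ : ∃ C, ∀ p ∈ (closedBall t₀ 1) ×ˢ (uIcc (0:ℝ) (2 * π)), ‖G' p‖ ≤ C :=
    ((isCompact_closedBall t₀ 1).prod isCompact_uIcc).exists_bound_of_continuousOn
      hG'.continuousOn
  refine (intervalIntegral.hasDerivAt_integral_of_dominated_loc_of_deriv_le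
      (F := fun t x => G (t, x)) (F' := fun t x => G' (t, x)) (bound := fun _ => C)
      (ball_mem_nhds t₀ one_pos) ?_ ?_ ?_ ?_ ?_ ?_).2
  · filter_upwards with t
    exact (hG.comp (continuous_const.prodMk continuous_id)).aestronglyMeasurable.restrict
  · exact (hG.comp (continuous_const.prodMk continuous_id)).intervalIntegrable _ _
  · exact (hG'.comp (continuous_const.prodMk continuous_id)).aestronglyMeasurable.restrict
  · refine Filter.Eventually.of_forall (fun x hx t ht => ?_)
    exact hC (t, x) ⟨ball_subset_closedBall ht, uIoc_subset_uIcc hx⟩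
  · exact intervalIntegrable_const
  · exact Filter.Eventually.of_forall (fun x hx t ht => hd t x)

lemma fj_deriv_eq_zero (F : ℝ → ℝ) (hd : Differentiable ℝ F) (hanti : Antitone (deriv F))
    (hpos : ∀ t, 0 < F t) : ∀ t, deriv F t = 0 := by
  intro t₀
  by_contra hc
  rcases lt_or_gt_of_ne hc with hneg | hposc
  · set c := deriv F t₀ with hcdef
    have key : F (t₀ + F t₀ / (-c)) - F t₀ ≤ c * ((t₀ + F t₀ / (-c)) - t₀) := by
      refine (convex_Ici t₀).image_sub_le_mul_sub_of_deriv_le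
        hd.continuous.continuousOn hd.differentiableOn
        (fun z hz => hanti (le_of_lt (by rwa [interior_Ici] at hz)))
        t₀ self_mem_Ici _ ?_ ?_
      · have : 0 ≤ F t₀ / (-c) := le_of_lt (div_pos (hpos t₀) (by linarith))
        exact mem_Ici.2 (by linarith)
      · have : 0 ≤ F t₀ / (-c) := le_of_lt (div_pos (hpos t₀) (by linarith))
        linarith
    have hmul : c * ((t₀ + F t₀ / (-c)) - t₀) = -F t₀ := by
      field_simp
      ring
    have := hpos (t₀ + F t₀ / (-c))
    linarith [hpos t₀]
  · set c := deriv F t₀ with hcdef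
    have key : c * (t₀ - (t₀ - F t₀ / c)) ≤ F t₀ - F (t₀ - F t₀ / c) := by
      refine (convex_Iic t₀).mul_sub_le_image_sub_of_le_deriv
        hd.continuous.continuousOn hd.differentiableOn
        (fun z hz => hanti (le_of_lt (by rwa [interior_Iic] at hz)))
        _ ?_ t₀ self_mem_Iic ?_
      · have : 0 ≤ F t₀ / c := le_of_lt (div_pos (hpos t₀) hposc)
        exact mem_Iic.2 (by linarith)
      · have : 0 ≤ F t₀ / c := le_of_lt (div_pos (hpos t₀) hposc)
        linarith
    have hmul : c * (t₀ - (t₀ - F t₀ / c)) = F t₀ := by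
      field_simp
      ring
    have := hpos (t₀ - F t₀ / c)
    linarith

lemma fj_zero_of_integral_zero (h : ℝ → ℝ) (hc : Continuous h) (hnn : ∀ x, 0 ≤ h x)
    (hper : ∀ x, h (x + 2 * π) = h x) (hint : ∫ x in (0:ℝ)..(2 * π), h x = 0) :
    ∀ x, h x = 0 := by
  by_contra hcon
  push_neg at hcon
  obtain ⟨x₀, hx₀⟩ := hcon
  have hper' : Function.Periodic h (2 * π) := hper
  obtain ⟨x₁, hx₁m, hx₁e⟩ := hper'.exists_mem_Ico₀ (by positivity) x₀
  have hx₁ : 0 < h x₁ := hx₁e ▸ (hnn x₀).lt_of_ne (Ne.symm hx₀)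
  have hopen : IsOpen (Function.support h) := by
    have : Function.support h = h ⁻¹' ({0}ᶜ) := by
      ext z; simp [Function.mem_support]
    rw [this]
    exact isOpen_compl_singleton.preimage hc
  obtain ⟨δ, hδ, hball⟩ :=
    Metric.isOpen_iff.1 hopen x₁ (by simpa [Function.mem_support] using hx₁.ne')
  set c : ℝ := min (x₁ + δ) (2 * π) with hcdef
  have hx₁c : x₁ < c := lt_min (by linarith) hx₁m.2
  have hsub : Ioo x₁ c ⊆ Function.support h ∩ Ioc 0 (2 * π) := by
    intro z hz
    refine ⟨hball ?_,
      ⟨lt_of_le_of_lt hx₁m.1 hz.1, le_of_lt (lt_of_lt_of_le hz.2 (min_le_right _ _))⟩⟩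
    rw [mem_ball, Real.dist_eq, abs_of_pos (by linarith [hz.1])]
    have h1 := hz.2
    have h2 := min_le_left (x₁ + δ) (2 * π)
    linarith
  have hposmeas : 0 < volume (Function.support h ∩ Ioc 0 (2 * π)) := by
    refine lt_of_lt_of_le ?_ (measure_mono hsub)
    rw [Real.volume_Ioo]
    simpa using hx₁c
  have hpos : 0 < ∫ x in (0:ℝ)..(2 * π), h x := by
    rw [intervalIntegral.integral_pos_iff_support_of_nonneg_ae'
      (Filter.Eventually.of_forall (fun z => hnn z)) (hc.intervalIntegrable _ _)]
    exact ⟨by positivity, hposmeas⟩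
  linarith [hint ▸ hpos]

end FJAux

/- STATEMENT 3 (Fritz John example): every smooth solution of
   y_tt - y_xx = (y_t)^2, x ∈ 𝕋, defined for all t ∈ ℝ, is constant. -/
theorem fritz_john_no_global_solutions
    (y : ℝ → ℝ → ℝ)
    (hy : ContDiff ℝ (⊤ : ℕ∞) (fun q : ℝ × ℝ => y q.1 q.2))
    (hper : ∀ t x, y t (x + 2 * π) = y t x)
    (hpde : ∀ t x, dtt y t x - dxx y t x = (dt y t x) ^ 2) :
    ∃ C : ℝ, ∀ t x, y t x = C := by
  classical
  set f : ℝ × ℝ → ℝ := fun q => y q.1 q.2 with hfdef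
  set f₁ : ℝ × ℝ → ℝ := fjD1 f with hf₁def
  set g₁ : ℝ × ℝ → ℝ := fjD2 f with hg₁def
  set f₂ : ℝ × ℝ → ℝ := fjD1 f₁ with hf₂def
  set g₂ : ℝ × ℝ → ℝ := fjD2 g₁ with hg₂def
  have hfd : Differentiable ℝ f := hy.differentiable (by simp)
  have hf₁c : ContDiff ℝ (⊤ : ℕ∞) f₁ := fjD1_contDiff hy
  have hg₁c : ContDiff ℝ (⊤ : ℕ∞) g₁ := fjD2_contDiff hy
  have hf₁d : Differentiable ℝ f₁ := hf₁c.differentiable (by simp)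
  have hg₁d : Differentiable ℝ g₁ := hg₁c.differentiable (by simp)
  have hg₂c : Continuous g₂ := (fjD2_contDiff hg₁c).continuous
  -- basic derivative identifications
  have ht1 : ∀ t x, HasDerivAt (fun s => y s x) (f₁ (t, x)) t := fun t x =>
    fjD1_hasDerivAt hfd t x
  have ht2 : ∀ t x, HasDerivAt (fun s => deriv (fun s' => y s' x) s) (f₂ (t, x)) t := by
    intro t x
    have h := fjD1_hasDerivAt hf₁d t x
    have e : (fun s => deriv (fun s' => y s' x) s) = fun s => f₁ (s, x) :=
      funext fun s => (ht1 s x).deriv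
    rw [e]; exact h
  have hx1 : ∀ t x, HasDerivAt (fun z => y t z) (g₁ (t, x)) x := fun t x =>
    fjD2_hasDerivAt hfd t x
  have hx2 : ∀ t x, HasDerivAt (fun z => deriv (fun z' => y t z') z) (g₂ (t, x)) x := by
    intro t x
    have h := fjD2_hasDerivAt hg₁d t x
    have e : (fun z => deriv (fun z' => y t z') z) = fun z => g₁ (t, z) :=
      funext fun z => (hx1 t z).deriv
    rw [e]; exact h
  -- the PDE in terms of the partials
  have hP : ∀ t x, f₂ (t, x) - g₂ (t, x) = (f₁ (t, x)) ^ 2 := by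
    intro t x
    have h := hpde t x
    rw [show dtt y t x = f₂ (t, x) from (ht2 t x).deriv,
      show dxx y t x = g₂ (t, x) from (hx2 t x).deriv,
      show dt y t x = f₁ (t, x) from (ht1 t x).deriv] at h
    exact h
  -- the substitution u = exp (-y)
  set u : ℝ × ℝ → ℝ := fun p => Real.exp (-f p) with hudef
  set v : ℝ × ℝ → ℝ := fun p => -f₁ p * u p with hvdef
  set w : ℝ × ℝ → ℝ := fun p => -g₂ p * u p with hwdef
  have hu_cont : Continuous u := Real.continuous_exp.comp hy.continuous.neg
  have hv_cont : Continuous v := (hf₁c.continuous.neg).mul hu_cont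
  have hw_cont : Continuous w := (hg₂c.neg).mul hu_cont
  have hu1 : ∀ t x, HasDerivAt (fun s => u (s, x)) (v (t, x)) t := by
    intro t x
    have h := ((ht1 t x).neg).exp
    have e : Real.exp (-y t x) * -f₁ (t, x) = v (t, x) := by
      simp only [hvdef, hudef, hfdef]; ring
    rw [← e]; exact h
  have hu2 : ∀ t x, HasDerivAt (fun s => v (s, x)) (w (t, x)) t := by
    intro t x
    have hm := ((fjD1_hasDerivAt hf₁d t x).neg).mul (hu1 t x)
    have e : -f₂ (t, x) * u (t, x) + -f₁ (t, x) * v (t, x) = w (t, x) := by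
      simp only [hvdef, hwdef]
      linear_combination (-(u (t, x))) * hP t x
    rw [← e]; exact hm
  have hux : ∀ t x, HasDerivAt (fun z => u (t, z)) (-g₁ (t, x) * u (t, x)) x := by
    intro t x
    have h := ((hx1 t x).neg).exp
    have e : Real.exp (-y t x) * -g₁ (t, x) = -g₁ (t, x) * u (t, x) := by
      simp only [hudef, hfdef]; ring
    rw [← e]; exact h
  -- periodicity of the derivatives
  have hdxper : ∀ t x, g₁ (t, x + 2 * π) = g₁ (t, x) := by
    intro t x
    have e1 : g₁ (t, x + 2 * π) = deriv (fun z => y t z) (x + 2 * π) :=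
      ((hx1 t (x + 2 * π)).deriv).symm
    rw [e1, ← deriv_comp_add_const]
    have e2 : (fun z => y t (z + 2 * π)) = fun z => y t z := funext fun z => hper t z
    rw [e2]; exact (hx1 t x).deriv
  have huper : ∀ t x, u (t, x + 2 * π) = u (t, x) := by
    intro t x
    simp only [hudef]
    have : f (t, x + 2 * π) = f (t, x) := hper t x
    rw [this]
  -- the averaged quantity
  set F : ℝ → ℝ := fun t => ∫ x in (0:ℝ)..(2 * π), u (t, x) with hFdef
  set F1 : ℝ → ℝ := fun t => ∫ x in (0:ℝ)..(2 * π), v (t, x) with hF1def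
  have hF' : ∀ t, HasDerivAt F (F1 t) t := fun t =>
    fj_hasDerivAt_integral u v hu_cont hv_cont hu1 t
  have hF'' : ∀ t, HasDerivAt F1 (∫ x in (0:ℝ)..(2 * π), w (t, x)) t := fun t =>
    fj_hasDerivAt_integral v w hv_cont hw_cont hu2 t
  have hFpos : ∀ t, 0 < F t := fun t =>
    intervalIntegral.intervalIntegral_pos_of_pos
      ((hu_cont.comp (continuous_const.prodMk continuous_id)).intervalIntegrable _ _)
      (fun x => Real.exp_pos _) (by positivity)
  -- integration by parts: F'' t = - ∫ g₁² u ≤ 0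
  have hFw : ∀ t, (∫ x in (0:ℝ)..(2 * π), w (t, x)) =
      - ∫ x in (0:ℝ)..(2 * π), (g₁ (t, x)) ^ 2 * u (t, x) := by
    intro t
    have hparts := intervalIntegral.integral_mul_deriv_eq_deriv_mul
      (a := (0:ℝ)) (b := 2 * π) (u := fun x => u (t, x)) (v := fun x => g₁ (t, x))
      (u' := fun x => -g₁ (t, x) * u (t, x)) (v' := fun x => g₂ (t, x))
      (fun x _ => hux t x) (fun x _ => fjD2_hasDerivAt hg₁d t x)
      (((((hg₁c.continuous.comp (continuous_const.prodMk continuous_id)).neg).mul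
        (hu_cont.comp (continuous_const.prodMk continuous_id)))).intervalIntegrable _ _)
      ((hg₂c.comp (continuous_const.prodMk continuous_id)).intervalIntegrable _ _)
    have hb1 : u (t, 2 * π) = u (t, 0) := by
      have := huper t 0
      rwa [zero_add] at this
    have hb2 : g₁ (t, 2 * π) = g₁ (t, 0) := by
      have := hdxper t 0
      rwa [zero_add] at this
    have e1 : ∀ x, w (t, x) = -(u (t, x) * g₂ (t, x)) := fun x => by
      simp only [hwdef]; ring
    have e2 : ∀ x : ℝ, (-g₁ (t, x) * u (t, x)) * g₁ (t, x) =
        -((g₁ (t, x)) ^ 2 * u (t, x)) := fun x => by ring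
    calc ∫ x in (0:ℝ)..(2 * π), w (t, x)
        = ∫ x in (0:ℝ)..(2 * π), -(u (t, x) * g₂ (t, x)) := by simp only [e1]
      _ = -(∫ x in (0:ℝ)..(2 * π), u (t, x) * g₂ (t, x)) := intervalIntegral.integral_neg
      _ = -(u (t, 2 * π) * g₁ (t, 2 * π) - u (t, 0) * g₁ (t, 0) -
            ∫ x in (0:ℝ)..(2 * π), (-g₁ (t, x) * u (t, x)) * g₁ (t, x)) := by rw [hparts]
      _ = ∫ x in (0:ℝ)..(2 * π), (-g₁ (t, x) * u (t, x)) * g₁ (t, x) := by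
            rw [hb1, hb2]; ring
      _ = ∫ x in (0:ℝ)..(2 * π), -((g₁ (t, x)) ^ 2 * u (t, x)) := by simp only [e2]
      _ = - ∫ x in (0:ℝ)..(2 * π), (g₁ (t, x)) ^ 2 * u (t, x) :=
            intervalIntegral.integral_neg
  have hF''le : ∀ t, (∫ x in (0:ℝ)..(2 * π), w (t, x)) ≤ 0 := by
    intro t
    rw [hFw t]
    have h0 : 0 ≤ ∫ x in (0:ℝ)..(2 * π), (g₁ (t, x)) ^ 2 * u (t, x) :=
      intervalIntegral.integral_nonneg (by positivity)
        (fun x _ => by positivity)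
    linarith
  -- F is concave and positive, hence F' ≡ 0
  have hderivF : deriv F = F1 := funext fun t => (hF' t).deriv
  have hFdiff : Differentiable ℝ F := fun t => (hF' t).differentiableAt
  have hF1diff : Differentiable ℝ F1 := fun t => (hF'' t).differentiableAt
  have hanti : Antitone (deriv F) := by
    rw [hderivF]
    exact antitone_of_deriv_nonpos hF1diff
      (fun t => by rw [(hF'' t).deriv]; exact hF''le t)
  have hF1zero : ∀ t, F1 t = 0 := by
    intro t
    have := fj_deriv_eq_zero F hFdiff hanti hFpos t
    rwa [hderivF] at this
  -- therefore F'' ≡ 0, forcing ∫ g₁² u = 0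
  have hF''zero : ∀ t, (∫ x in (0:ℝ)..(2 * π), w (t, x)) = 0 := by
    intro t
    have hF1fun : F1 = fun _ => (0:ℝ) := funext hF1zero
    have h := hF'' t
    rw [hF1fun] at h
    exact h.unique (hasDerivAt_const t 0)
  have hiz : ∀ t, (∫ x in (0:ℝ)..(2 * π), (g₁ (t, x)) ^ 2 * u (t, x)) = 0 := by
    intro t
    have := hF''zero t
    rw [hFw t, neg_eq_zero] at this
    exact this
  -- hence g₁ ≡ 0 : y is constant in x
  have hg₁0 : ∀ t x, g₁ (t, x) = 0 := by
    intro t x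
    have hz := fj_zero_of_integral_zero (fun x => (g₁ (t, x)) ^ 2 * u (t, x))
      (((hg₁c.continuous.comp (continuous_const.prodMk continuous_id)).pow 2).mul
        (hu_cont.comp (continuous_const.prodMk continuous_id)))
      (fun x => by positivity)
      (fun x => by
        show g₁ (t, x + 2 * π) ^ 2 * u (t, x + 2 * π) = g₁ (t, x) ^ 2 * u (t, x)
        rw [hdxper t x, huper t x])
      (hiz t) x
    have hu0 : u (t, x) ≠ 0 := (Real.exp_pos _).ne'
    have : (g₁ (t, x)) ^ 2 = 0 := by
      rcases mul_eq_zero.1 hz with h | h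
      · exact h
      · exact absurd h hu0
    exact pow_eq_zero_iff (n := 2) (by norm_num) |>.1 this
  have hg₂0 : ∀ t x, g₂ (t, x) = 0 := by
    intro t x
    have h := fjD2_hasDerivAt hg₁d t x
    have e : (fun z => g₁ (t, z)) = fun _ => (0:ℝ) := funext fun z => hg₁0 t z
    rw [e] at h
    exact h.unique (hasDerivAt_const x 0)
  have hconstx : ∀ t x, y t x = y t 0 := by
    intro t x
    exact is_const_of_deriv_eq_zero (fun z => (hx1 t z).differentiableAt)
      (fun z => by rw [(hx1 t z).deriv]; exact hg₁0 t z) x 0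
  -- the remaining ODE in t
  set G : ℝ → ℝ := fun t => u (t, 0) with hGdef
  set G1 : ℝ → ℝ := fun t => v (t, 0) with hG1def
  have hG' : ∀ t, HasDerivAt G (G1 t) t := fun t => hu1 t 0
  have hw0 : ∀ t, w (t, 0) = 0 := fun t => by
    simp only [hwdef, hg₂0 t 0]; ring
  have hG1' : ∀ t, HasDerivAt G1 0 t := fun t => hw0 t ▸ hu2 t 0
  have hG1diff : Differentiable ℝ G1 := fun t => (hG1' t).differentiableAt
  have hG1const : ∀ a b : ℝ, G1 a = G1 b :=
    is_const_of_deriv_eq_zero hG1diff (fun t => (hG1' t).deriv)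
  have hderivG : deriv G = G1 := funext fun t => (hG' t).deriv
  have hGdiff : Differentiable ℝ G := fun t => (hG' t).differentiableAt
  have hGanti : Antitone (deriv G) := by
    rw [hderivG]
    intro a b _
    exact le_of_eq (hG1const b a)
  have hGpos : ∀ t, 0 < G t := fun t => Real.exp_pos _
  have hG1zero : ∀ t, deriv G t = 0 := fj_deriv_eq_zero G hGdiff hGanti hGpos
  have hGconst : ∀ a b : ℝ, G a = G b := is_const_of_deriv_eq_zero hGdiff hG1zero
  have hyconst : ∀ t : ℝ, y t 0 = y 0 0 := by
    intro t
    have h := hGconst t 0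
    simp only [hGdef, hudef] at h
    have := Real.exp_injective h
    simpa using this
  exact ⟨y 0 0, fun t x => by rw [hconstx t x, hyconst t]⟩
end
end

section
/- Let p be an even positive integer. Every smooth quasi-periodic solution of y_tt - y_xx = (y_x)^p on the circle x ∈ T is constant. -/
noncomputable section
open Real

/-- Simultaneous Dirichlet-type approximation with arbitrarily large times. -/
private lemma qp_pigeon (n : ℕ) (ω : Fin n → ℝ) {K : ℕ} (hK : 0 < K) :
    ∃ (M : ℕ) (k : Fin n → ℤ), 1 ≤ M ∧ ∀ i, |(M : ℝ) * ω i - 2 * π * k i| < 2 * π / K := by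
  have h2π : (0:ℝ) < 2 * π := by positivity
  set α : Fin n → ℝ := fun i => ω i / (2 * π) with hα
  have hbox : ∀ (j : ℕ) (i : Fin n), (⌊Int.fract ((j : ℝ) * α i) * K⌋).toNat < K := by
    intro j i
    have h0 : (0:ℝ) ≤ Int.fract ((j:ℝ) * α i) := Int.fract_nonneg _
    have h1 : Int.fract ((j:ℝ) * α i) < 1 := Int.fract_lt_one _
    have hKpos : (0:ℝ) < K := by exact_mod_cast hK
    have hlt : Int.fract ((j:ℝ) * α i) * K < K := by nlinarith
    have hfl : ⌊Int.fract ((j:ℝ) * α i) * K⌋ < (K:ℤ) := Int.floor_lt.mpr (by exact_mod_cast hlt)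
    omega
  set b : ℕ → (Fin n → Fin K) := fun j i => ⟨(⌊Int.fract ((j : ℝ) * α i) * K⌋).toNat, hbox j i⟩
    with hb
  have hcard : (Finset.univ : Finset (Fin n → Fin K)).card < (Finset.range (K ^ n + 1)).card := by
    simp [Finset.card_univ, Nat.lt_succ_self]
  obtain ⟨j, hj, j', hj', hne, heq⟩ :=
    Finset.exists_ne_map_eq_of_card_lt_of_maps_to hcard (f := b)
      (fun a _ => Finset.mem_univ _)
  -- key step for ordered pair
  have key : ∀ j j' : ℕ, j < j' → b j = b j' →
      ∃ (M : ℕ) (k : Fin n → ℤ), 1 ≤ M ∧ ∀ i, |(M : ℝ) * ω i - 2 * π * k i| < 2 * π / K := by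
    intro j j' hlt hbeq
    refine ⟨j' - j, fun i => ⌊(j':ℝ) * α i⌋ - ⌊(j:ℝ) * α i⌋, by omega, fun i => ?_⟩
    have hKpos : (0:ℝ) < K := by exact_mod_cast hK
    -- floors of fract * K agree
    have hfl : ⌊Int.fract ((j:ℝ) * α i) * K⌋ = ⌊Int.fract ((j':ℝ) * α i) * K⌋ := by
      have h1 : (b j i).val = (b j' i).val := by rw [hbeq]
      have hn1 : (0:ℤ) ≤ ⌊Int.fract ((j:ℝ) * α i) * K⌋ :=
        Int.floor_nonneg.mpr (mul_nonneg (Int.fract_nonneg _) (by positivity))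
      have hn2 : (0:ℤ) ≤ ⌊Int.fract ((j':ℝ) * α i) * K⌋ :=
        Int.floor_nonneg.mpr (mul_nonneg (Int.fract_nonneg _) (by positivity))
      simp only [hb] at h1
      omega
    have habs : |Int.fract ((j':ℝ) * α i) - Int.fract ((j:ℝ) * α i)| < 1 / K := by
      have := Int.abs_sub_lt_one_of_floor_eq_floor hfl.symm
      rw [← sub_mul, abs_mul, abs_of_nonneg hKpos.le] at this
      rw [div_eq_inv_mul, lt_inv_mul_iff₀ hKpos, mul_comm]
      linarith
    have hfract : ((j' - j : ℕ) : ℝ) * α i - ((⌊(j':ℝ) * α i⌋ - ⌊(j:ℝ) * α i⌋ : ℤ) : ℝ)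
        = Int.fract ((j':ℝ) * α i) - Int.fract ((j:ℝ) * α i) := by
      have hj'c : ((j' - j : ℕ) : ℝ) = (j' : ℝ) - j := by
        push_cast [Nat.cast_sub hlt.le]; ring
      rw [hj'c]
      unfold Int.fract
      push_cast
      ring
    have hωα : ω i = 2 * π * α i := by
      rw [hα]; field_simp
    rw [hωα]
    have : ((j' - j : ℕ) : ℝ) * (2 * π * α i) - 2 * π * ((⌊(j':ℝ) * α i⌋ - ⌊(j:ℝ) * α i⌋ : ℤ) : ℝ)
        = 2 * π * (((j' - j : ℕ) : ℝ) * α i - ((⌊(j':ℝ) * α i⌋ - ⌊(j:ℝ) * α i⌋ : ℤ) : ℝ)) := by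
      push_cast; ring
    rw [this, hfract, abs_mul, abs_of_nonneg h2π.le, div_eq_mul_inv, ← one_div]
    exact mul_lt_mul_of_pos_left habs h2π
  rcases lt_or_gt_of_ne hne with h | h
  · exact key j j' h heq
  · exact key j' j h heq.symm

private lemma qp_approx (n : ℕ) (ω : Fin n → ℝ) {δ : ℝ} (hδ : 0 < δ) (T : ℝ) :
    ∃ (t : ℝ) (m : Fin n → ℤ), T ≤ t ∧ ∀ i, |ω i * t - 2 * π * m i| < δ := by
  have h2π : (0:ℝ) < 2 * π := by positivity
  set N : ℕ := max 1 ⌈T⌉₊ with hN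
  have hN1 : 1 ≤ N := le_max_left _ _
  have hNT : T ≤ N := le_trans (Nat.le_ceil T) (by exact_mod_cast le_max_right 1 ⌈T⌉₊)
  set K : ℕ := ⌈2 * π * N / δ⌉₊ + 1 with hKdef
  have hK : 0 < K := Nat.succ_pos _
  have hKgt : 2 * π * N / δ < K := lt_of_le_of_lt (Nat.le_ceil _) (by exact_mod_cast Nat.lt_succ_self _)
  obtain ⟨M, k, hM1, hMk⟩ := qp_pigeon n ω hK
  refine ⟨((N * M : ℕ) : ℝ), fun i => N * k i, ?_, fun i => ?_⟩
  · calc T ≤ (N:ℝ) := hNT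
      _ ≤ ((N * M : ℕ) : ℝ) := by
        push_cast
        nlinarith [Nat.one_le_cast (α := ℝ) |>.mpr hM1, Nat.cast_nonneg (α := ℝ) N]
  · have h1 : ω i * ((N * M : ℕ) : ℝ) - 2 * π * ((N * k i : ℤ) : ℝ)
        = (N : ℝ) * ((M:ℝ) * ω i - 2 * π * k i) := by push_cast; ring
    have hNpos : (0:ℝ) < N := by exact_mod_cast hN1
    have hKpos : (0:ℝ) < K := by exact_mod_cast hK
    calc |ω i * ((N * M : ℕ) : ℝ) - 2 * π * ((N * k i : ℤ) : ℝ)|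
        = (N:ℝ) * |(M:ℝ) * ω i - 2 * π * k i| := by
          rw [h1, abs_mul, abs_of_nonneg hNpos.le]
      _ < (N:ℝ) * (2 * π / K) := by
          exact mul_lt_mul_of_pos_left (hMk i) hNpos
      _ < δ := by
          rw [mul_div_assoc'] at *
          rw [div_lt_iff₀ hKpos]
          rw [div_lt_iff₀ hδ] at hKgt
          nlinarith

private lemma qp_multiperiodic {n : ℕ} {f : (Fin n → ℝ) → ℝ}
    (hper : ∀ θ i, f (Function.update θ i (θ i + 2 * π)) = f θ)
    (θ : Fin n → ℝ) (m : Fin n → ℤ) :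
    f (fun i => θ i + 2 * π * m i) = f θ := by
  have hcoord : ∀ (θ : Fin n → ℝ) (i : Fin n) (k : ℤ),
      f (Function.update θ i (θ i + 2 * π * k)) = f θ := by
    intro θ i k
    have hP : Function.Periodic (fun s => f (Function.update θ i s)) (2 * π) := by
      intro s
      have h := hper (Function.update θ i s) i
      simpa [Function.update_idem] using h
    have h2 := (hP.int_mul k) (θ i)
    calc f (Function.update θ i (θ i + 2 * π * k))
        = f (Function.update θ i (θ i + k * (2 * π))) := by ring_nf
      _ = f (Function.update θ i (θ i)) := h2
      _ = f θ := by rw [Function.update_eq_self]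
  have main : ∀ s : Finset (Fin n),
      f (fun i => θ i + if i ∈ s then 2 * π * m i else 0) = f θ := by
    intro s
    induction s using Finset.induction with
    | empty => simp
    | @insert a s ha ih =>
      have heq : (fun i => θ i + if i ∈ insert a s then 2 * π * m i else 0)
          = Function.update (fun i => θ i + if i ∈ s then 2 * π * m i else 0) a
              ((fun i => θ i + if i ∈ s then 2 * π * m i else 0) a + 2 * π * m a) := by
        funext j
        by_cases hj : j = a
        · subst hj; simp [ha]
        · simp [Function.update_of_ne hj, Finset.mem_insert, hj]
      rw [heq, hcoord, ih]
  have := main Finset.univ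
  simpa using this

private lemma qp_recur {n : ℕ} (ω : Fin n → ℝ) {f : (Fin n → ℝ) → ℝ} (hf : Continuous f)
    (hper : ∀ θ i, f (Function.update θ i (θ i + 2 * π)) = f θ)
    {ε : ℝ} (hε : 0 < ε) (T : ℝ) :
    ∃ t : ℝ, T ≤ t ∧ |f (fun i => ω i * t) - f 0| < ε := by
  obtain ⟨δ, hδ, hball⟩ := Metric.continuousAt_iff.mp (hf.continuousAt (x := 0)) ε hε
  obtain ⟨t, m, hT, hsm⟩ := qp_approx n ω hδ T
  refine ⟨t, hT, ?_⟩
  set θ' : Fin n → ℝ := fun i => ω i * t - 2 * π * m i with hθ'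
  have h1 : f (fun i => ω i * t) = f θ' := by
    have : (fun i => ω i * t) = (fun i => θ' i + 2 * π * m i) := by
      funext i; simp only [hθ']; ring
    rw [this]
    exact qp_multiperiodic hper θ' m
  have h2 : dist θ' 0 < δ := by
    rw [dist_pi_lt_iff hδ]
    intro i
    simpa [Real.dist_eq] using hsm i
  have h3 := hball h2
  rw [Real.dist_eq] at h3
  rw [h1]
  exact h3

private lemma hasDerivAt_line {E : Type*} [NormedAddCommGroup E] [NormedSpace ℝ E]
    {F : E → ℝ} (hF : Differentiable ℝ F) {L : ℝ → E} {v : E} {s : ℝ}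
    (hL : HasDerivAt L v s) :
    HasDerivAt (fun t => F (L t)) (fderiv ℝ F (L s) v) s :=
  (hF (L s)).hasFDerivAt.comp_hasDerivAt s hL

private lemma fderiv_of_translation {E : Type*} [NormedAddCommGroup E] [NormedSpace ℝ E]
    {f : E → ℝ} (hf : Differentiable ℝ f) (w : E) (hper : ∀ q, f (q + w) = f q) (q : E) :
    fderiv ℝ f (q + w) = fderiv ℝ f q := by
  have h1 : HasFDerivAt (fun z => f (z + w))
      ((fderiv ℝ f (q + w)).comp (ContinuousLinearMap.id ℝ E)) q :=
    (hf (q + w)).hasFDerivAt.comp q ((hasFDerivAt_id q).add_const w)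
  have h2 : (fun z => f (z + w)) = f := funext hper
  rw [h2] at h1
  have := h1.fderiv
  simpa using this.symm

private lemma sliceT {F : ℝ × ℝ → ℝ} (hF : ContDiff ℝ (⊤ : ℕ∞) F) (t x : ℝ) :
    HasDerivAt (fun s => F (s, x)) (fderiv ℝ F (t, x) (1, 0)) t :=
  hasDerivAt_line (hF.differentiable (by simp)) ((hasDerivAt_id t).prodMk (hasDerivAt_const t x))

private lemma sliceX {F : ℝ × ℝ → ℝ} (hF : ContDiff ℝ (⊤ : ℕ∞) F) (t x : ℝ) :
    HasDerivAt (fun z => F (t, z)) (fderiv ℝ F (t, x) (0, 1)) x :=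
  hasDerivAt_line (hF.differentiable (by simp)) ((hasDerivAt_const x t).prodMk (hasDerivAt_id x))


/- STATEMENT 4: even p > 0; any smooth quasi-periodic solution of
   y_tt - y_xx = (y_x)^p on the circle is constant. -/
theorem no_qp_solutions_yx_pow_even
    (p : ℕ) (hp : Even p) (hp0 : 0 < p)
    (y : ℝ → ℝ → ℝ)
    (hy : ContDiff ℝ (⊤ : ℕ∞) (fun q : ℝ × ℝ => y q.1 q.2))
    (hqp : QuasiPeriodic y)
    (hpde : ∀ t x, dtt y t x - dxx y t x = (dx y t x) ^ p) :
    ∃ C : ℝ, ∀ t x, y t x = C := by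
  obtain ⟨n, Y, ω, hn, hY, hYper, hYx, hind, hyY⟩ := hqp
  have h2π : (0:ℝ) < 2 * π := by positivity
  set Fn : ℝ × ℝ → ℝ := fun q => y q.1 q.2 with hFndef
  have hFd : Differentiable ℝ Fn := hy.differentiable (by simp)
  set K1 : ℝ × ℝ → ℝ := fun q => fderiv ℝ Fn q (1, 0) with hK1def
  set K2 : ℝ × ℝ → ℝ := fun q => fderiv ℝ Fn q (0, 1) with hK2def
  have hK1s : ContDiff ℝ (⊤ : ℕ∞) K1 := (hy.fderiv_right (by simp)).clm_apply contDiff_const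
  have hK2s : ContDiff ℝ (⊤ : ℕ∞) K2 := (hy.fderiv_right (by simp)).clm_apply contDiff_const
  have hdtK : ∀ t x, HasDerivAt (fun s => y s x) (K1 (t, x)) t := fun t x => sliceT hy t x
  have hdxK : ∀ t x, HasDerivAt (fun z => y t z) (K2 (t, x)) x := fun t x => sliceX hy t x
  have hdt : ∀ t x, dt y t x = K1 (t, x) := fun t x => (hdtK t x).deriv
  have hdx : ∀ t x, dx y t x = K2 (t, x) := fun t x => (hdxK t x).deriv
  set K1' : ℝ × ℝ → ℝ := fun q => fderiv ℝ K1 q (1, 0) with hK1'def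
  set K2' : ℝ × ℝ → ℝ := fun q => fderiv ℝ K2 q (0, 1) with hK2'def
  have hK1's : ContDiff ℝ (⊤ : ℕ∞) K1' := (hK1s.fderiv_right (by simp)).clm_apply contDiff_const
  have hK2's : ContDiff ℝ (⊤ : ℕ∞) K2' := (hK2s.fderiv_right (by simp)).clm_apply contDiff_const
  have hK1'c : Continuous K1' := hK1's.continuous
  have hK2'c : Continuous K2' := hK2's.continuous
  have hdtt : ∀ t x, dtt y t x = K1' (t, x) := by
    intro t x
    show deriv (fun s => deriv (fun s' => y s' x) s) t = _
    have he : (fun s => deriv (fun s' => y s' x) s) = fun s => K1 (s, x) :=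
      funext fun s => (hdtK s x).deriv
    rw [he]
    exact (sliceT hK1s t x).deriv
  have hdxx : ∀ t x, dxx y t x = K2' (t, x) := by
    intro t x
    show deriv (fun z => deriv (fun z' => y t z') z) x = _
    have he : (fun z => deriv (fun z' => y t z') z) = fun z => K2 (t, z) :=
      funext fun z => (hdxK t z).deriv
    rw [he]
    exact (sliceX hK2s t x).deriv
  have hdttH : ∀ t x, HasDerivAt (fun s => dt y s x) (dtt y t x) t := by
    intro t x
    have he : (fun s => dt y s x) = fun s => K1 (s, x) := funext fun s => hdt s x
    rw [he, hdtt t x]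
    exact sliceT hK1s t x
  have hdxxH : ∀ t x, HasDerivAt (fun z => dx y t z) (dxx y t x) x := by
    intro t x
    have he : (fun z => dx y t z) = fun z => K2 (t, z) := funext fun z => hdx t z
    rw [he, hdxx t x]
    exact sliceX hK2s t x
  -- periodicity in x
  have hyx : ∀ t x, y t (x + 2 * π) = y t x := by
    intro t x; rw [hyY, hyY, hYx]
  have hdxper : ∀ t z, dx y t (z + 2 * π) = dx y t z := by
    intro t z
    have h1 : HasDerivAt (fun w => y t (w + 2 * π)) (K2 (t, z + 2 * π)) z :=
      hasDerivAt_line hFd ((hasDerivAt_const z t).prodMk ((hasDerivAt_id z).add_const (2 * π)))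
    have h2 : (fun w => y t (w + 2 * π)) = fun w => y t w := funext fun w => hyx t w
    rw [h2] at h1
    rw [hdx t (z + 2 * π), hdx t z]
    rw [← (hdxK t z).deriv, ← h1.deriv]
  -- integral of dxx over a period is 0
  have hIdxx : ∀ t, (∫ x in (0:ℝ)..(2 * π), dxx y t x) = 0 := by
    intro t
    have hceq : (fun x => dxx y t x) = fun x => K2' (t, x) := funext fun x => hdxx t x
    have hint : IntervalIntegrable (fun x => dxx y t x) MeasureTheory.volume 0 (2 * π) := by
      rw [hceq]
      exact (hK2'c.comp (continuous_const.prodMk continuous_id)).intervalIntegrable _ _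
    rw [intervalIntegral.integral_eq_sub_of_hasDerivAt (fun x _ => hdxxH t x) hint]
    have := hdxper t 0
    rw [zero_add] at this
    rw [this, sub_self]
  -- Y side: the quasi-periodic representation of dt y
  set YF : (Fin n → ℝ) × ℝ → ℝ := fun q => Y q.1 q.2 with hYFdef
  have hYFd : Differentiable ℝ YF := hY.differentiable (by simp)
  set H : (Fin n → ℝ) × ℝ → ℝ := fun q => fderiv ℝ YF q (ω, 0) with hHdef
  have hHs : ContDiff ℝ (⊤ : ℕ∞) H := (hY.fderiv_right (by simp)).clm_apply contDiff_const
  have hHc : Continuous H := hHs.continuous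
  have hLω : ∀ (t x : ℝ), HasDerivAt (fun s : ℝ => ((fun i => ω i * s : Fin n → ℝ), x)) ((ω, 0)) t := by
    intro t x
    apply HasDerivAt.prodMk
    · exact hasDerivAt_pi.mpr fun i => by simpa using (hasDerivAt_id t).const_mul (ω i)
    · exact hasDerivAt_const t x
  have hdtH : ∀ t x, dt y t x = H ((fun i => ω i * t), x) := by
    intro t x
    show deriv (fun s => y s x) t = _
    have he : (fun s => y s x) = fun s => YF ((fun i => ω i * s), x) := funext fun s => hyY s x
    rw [he]
    exact (hasDerivAt_line hYFd (hLω t x)).deriv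
  have hYFtr : ∀ (i : Fin n) (q : (Fin n → ℝ) × ℝ), YF (q + (Pi.single i (2 * π), 0)) = YF q := by
    intro i q
    obtain ⟨θ, x⟩ := q
    show Y (θ + Pi.single i (2 * π)) (x + 0) = Y θ x
    rw [add_zero]
    have hupd : θ + Pi.single i (2 * π) = Function.update θ i (θ i + 2 * π) := by
      funext j
      by_cases hj : j = i
      · subst hj; simp
      · simp [Function.update_of_ne hj, Pi.single_apply, hj]
    rw [hupd, hYper]
  have hHper : ∀ θ x i, H (Function.update θ i (θ i + 2 * π), x) = H (θ, x) := by
    intro θ x i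
    have h1 : ((Function.update θ i (θ i + 2 * π), x) : (Fin n → ℝ) × ℝ)
        = ((θ, x) + (Pi.single i (2 * π), (0:ℝ))) := by
      refine Prod.ext ?_ ?_
      · show Function.update θ i (θ i + 2 * π) = θ + Pi.single i (2 * π)
        funext j
        by_cases hj : j = i
        · subst hj; simp
        · simp [Function.update_of_ne hj, Pi.single_apply, hj]
      · show x = x + 0
        rw [add_zero]
    rw [h1]
    show fderiv ℝ YF ((θ, x) + (Pi.single i (2 * π), (0:ℝ))) (ω, 0) = fderiv ℝ YF (θ, x) (ω, 0)
    rw [fderiv_of_translation hYFd _ (hYFtr i) (θ, x)]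
  -- G and E
  set G : (Fin n → ℝ) → ℝ := fun θ => ∫ x in (0:ℝ)..(2 * π), H (θ, x) with hGdef
  have hGc : Continuous G := by
    apply intervalIntegral.continuous_parametric_intervalIntegral_of_continuous'
      (f := fun (θ : Fin n → ℝ) (x : ℝ) => H (θ, x)) (μ := MeasureTheory.volume)
    exact hHc
  have hGper : ∀ θ i, G (Function.update θ i (θ i + 2 * π)) = G θ := by
    intro θ i
    exact intervalIntegral.integral_congr fun x _ => hHper θ x i
  set E : ℝ → ℝ := fun t => G (fun i => ω i * t) with hEdef
  have hEeq : ∀ t, E t = ∫ x in (0:ℝ)..(2 * π), dt y t x := by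
    intro t
    exact intervalIntegral.integral_congr fun x _ => (hdtH t x).symm
  set g : ℝ → ℝ := fun t => ∫ x in (0:ℝ)..(2 * π), (dx y t x) ^ p with hgdef
  have hdxc2 : Continuous (fun q : ℝ × ℝ => dx y q.1 q.2) := by
    have he : (fun q : ℝ × ℝ => dx y q.1 q.2) = K2 := funext fun q => hdx q.1 q.2
    rw [he]
    exact hK2s.continuous
  have hgc : Continuous g := by
    apply intervalIntegral.continuous_parametric_intervalIntegral_of_continuous'
      (f := fun (t : ℝ) (x : ℝ) => (dx y t x) ^ p) (μ := MeasureTheory.volume)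
    exact hdxc2.pow p
  have hgnn : ∀ t, 0 ≤ g t := fun t =>
    intervalIntegral.integral_nonneg h2π.le (fun x _ => hp.pow_nonneg _)
  -- differentiation under the integral sign
  have hdtc2 : Continuous (fun q : ℝ × ℝ => dt y q.1 q.2) := by
    have he : (fun q : ℝ × ℝ => dt y q.1 q.2) = K1 := funext fun q => hdt q.1 q.2
    rw [he]
    exact hK1s.continuous
  have hdttc2 : Continuous (fun q : ℝ × ℝ => dtt y q.1 q.2) := by
    have he : (fun q : ℝ × ℝ => dtt y q.1 q.2) = K1' := funext fun q => hdtt q.1 q.2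
    rw [he]
    exact hK1'c
  have hEderiv : ∀ t₀ : ℝ, HasDerivAt E (g t₀) t₀ := by
    intro t₀
    obtain ⟨M, hM⟩ := IsCompact.exists_bound_of_continuousOn
      ((isCompact_closedBall t₀ 1).prod isCompact_uIcc)
      (hdttc2.continuousOn (s := Metric.closedBall t₀ 1 ×ˢ Set.uIcc 0 (2 * π)))
    have key := intervalIntegral.hasDerivAt_integral_of_dominated_loc_of_deriv_le
      (F := fun t x => dt y t x) (F' := fun t x => dtt y t x) (x₀ := t₀)
      (a := 0) (b := 2 * π) (μ := MeasureTheory.volume) (bound := fun _ => M)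
      (s := Metric.ball t₀ 1) (Metric.ball_mem_nhds t₀ one_pos)
      (Filter.Eventually.of_forall fun t =>
        ((hdtc2.comp (continuous_const.prodMk continuous_id)).aestronglyMeasurable).restrict)
      ((hdtc2.comp (continuous_const.prodMk continuous_id)).intervalIntegrable _ _)
      ((hdttc2.comp (continuous_const.prodMk continuous_id)).aestronglyMeasurable).restrict
      (MeasureTheory.ae_of_all _ fun x hx t ht => by
        exact hM ((t, x) : ℝ × ℝ)
          ⟨Metric.ball_subset_closedBall ht, Set.uIoc_subset_uIcc hx⟩)
      (intervalIntegrable_const)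
      (MeasureTheory.ae_of_all _ fun x hx t ht => hdttH t x)
    have hEfun : E = fun t => ∫ x in (0:ℝ)..(2 * π), dt y t x := funext hEeq
    rw [hEfun]
    have hgval : g t₀ = ∫ x in (0:ℝ)..(2 * π), dtt y t₀ x := by
      have hsplit : Set.EqOn (fun x => dtt y t₀ x) (fun x => dxx y t₀ x + (dx y t₀ x) ^ p)
          (Set.uIcc 0 (2 * π)) := by
        intro x _
        have := hpde t₀ x
        simp only
        linarith
      rw [intervalIntegral.integral_congr hsplit]
      have hintdxx : IntervalIntegrable (fun x => dxx y t₀ x) MeasureTheory.volume 0 (2 * π) := by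
        have he : (fun x => dxx y t₀ x) = fun x => K2' (t₀, x) := funext fun x => hdxx t₀ x
        rw [he]
        exact (hK2'c.comp (continuous_const.prodMk continuous_id)).intervalIntegrable _ _
      have hintdxp : IntervalIntegrable (fun x => (dx y t₀ x) ^ p) MeasureTheory.volume 0 (2 * π) :=
        (((hdxc2.comp (continuous_const.prodMk continuous_id))).pow p).intervalIntegrable _ _
      rw [intervalIntegral.integral_add hintdxx hintdxp, hIdxx t₀, zero_add]
    rw [hgval]
    exact key.2
  -- E is "monotone with quasi-periodic recurrence", hence the integral of g vanishes
  have hEab : ∀ a b : ℝ, E b - E a = ∫ t in a..b, g t := by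
    intro a b
    rw [intervalIntegral.integral_eq_sub_of_hasDerivAt (fun t _ => hEderiv t)
      (hgc.intervalIntegrable a b)]
  have hE0 : E 0 = G 0 := by
    show G _ = G 0
    congr 1
    funext i
    simp
  have hrecur : ∀ (T : ℝ) (ε : ℝ), 0 < ε → ∃ t, T ≤ t ∧ |E t - E 0| < ε := by
    intro T ε hε
    obtain ⟨t, ht, h⟩ := qp_recur ω hGc hGper hε T
    exact ⟨t, ht, by rw [hE0]; exact h⟩
  have hrecurNeg : ∀ (T : ℝ) (ε : ℝ), 0 < ε → ∃ t, t ≤ T ∧ |E t - E 0| < ε := by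
    intro T ε hε
    obtain ⟨s, hs, h⟩ := qp_recur (fun i => -ω i) hGc hGper hε (-T)
    refine ⟨-s, by linarith, ?_⟩
    have he : (fun i => -ω i * s) = (fun i => ω i * (-s)) := funext fun i => by ring
    rw [he] at h
    rw [hE0]
    exact h
  have hmono : ∀ a b : ℝ, a ≤ b → E a ≤ E b := by
    intro a b hab
    have h1 := hEab a b
    have hnn : 0 ≤ ∫ t in a..b, g t :=
      intervalIntegral.integral_nonneg hab (fun u _ => hgnn u)
    linarith
  have hEconst : ∀ a b : ℝ, a ≤ b → E a = E b := by
    intro a b hab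
    by_contra hne
    have hlt : E a < E b := lt_of_le_of_ne (hmono a b hab) hne
    obtain ⟨t₂, ht₂, hh₂⟩ := hrecur b ((E b - E a) / 2) (by linarith)
    obtain ⟨t₁, ht₁, hh₁⟩ := hrecurNeg a ((E b - E a) / 2) (by linarith)
    have hm1 := hmono b t₂ ht₂
    have hm2 := hmono t₁ a ht₁
    rw [abs_lt] at hh₁ hh₂
    linarith [hh₁.1, hh₁.2, hh₂.1, hh₂.2]
  have hgzero : ∀ t₀ : ℝ, g t₀ = 0 := by
    intro t₀
    have hzero : (fun u => ∫ t in (0:ℝ)..u, g t) = fun _ => (0:ℝ) := by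
      funext u
      rw [← hEab]
      rcases le_total 0 u with h | h
      · rw [hEconst 0 u h]; ring
      · rw [hEconst u 0 h]; ring
    have hD : HasDerivAt (fun u => ∫ t in (0:ℝ)..u, g t) (g t₀) t₀ :=
      intervalIntegral.integral_hasDerivAt_right (hgc.intervalIntegrable 0 t₀)
        (hgc.stronglyMeasurableAtFilter _ _) hgc.continuousAt
    rw [hzero] at hD
    have := hD.deriv
    simpa using this.symm
  -- the space derivative vanishes identically
  have hdx0 : ∀ t x₀, dx y t x₀ = 0 := by
    intro t x₀
    set f : ℝ → ℝ := fun z => (dx y t z) ^ p with hfdef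
    have hfc : Continuous f := (hdxc2.comp (continuous_const.prodMk continuous_id)).pow p
    have hfnn : ∀ z, (0:ℝ) ≤ f z := fun z => hp.pow_nonneg _
    have hfper : Function.Periodic f (2 * π) := by
      intro z
      show (dx y t (z + 2 * π)) ^ p = (dx y t z) ^ p
      rw [hdxper t z]
    set a : ℝ := x₀ - 1 with hadef
    have htot : (∫ z in a..(a + 2 * π), f z) = 0 := by
      rw [hfper.intervalIntegral_add_eq a 0]
      have h00 : (∫ z in (0:ℝ)..(0 + 2 * π), f z) = g t := by
        rw [zero_add]
      rw [h00, hgzero t]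
    have hmem : x₀ ∈ Set.Ioo a (a + 2 * π) := by
      constructor
      · simp [hadef]
      · have := Real.pi_gt_three
        simp only [hadef]
        linarith
    have hpart : ∀ u ∈ Set.Icc a (a + 2 * π), (∫ z in a..u, f z) = 0 := by
      intro u hu
      have h1 : 0 ≤ ∫ z in a..u, f z :=
        intervalIntegral.integral_nonneg hu.1 fun z _ => hfnn z
      have h2 : 0 ≤ ∫ z in u..(a + 2 * π), f z :=
        intervalIntegral.integral_nonneg hu.2 fun z _ => hfnn z
      have h3 : (∫ z in a..u, f z) + ∫ z in u..(a + 2 * π), f z = 0 := by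
        rw [intervalIntegral.integral_add_adjacent_intervals (hfc.intervalIntegrable a u)
          (hfc.intervalIntegrable u _), htot]
      linarith
    have hev : (fun u => ∫ z in a..u, f z) =ᶠ[nhds x₀] (fun _ => (0:ℝ)) := by
      filter_upwards [isOpen_Ioo.mem_nhds hmem] with u hu
      exact hpart u (Set.Ioo_subset_Icc_self hu)
    have hD : HasDerivAt (fun u => ∫ z in a..u, f z) (f x₀) x₀ :=
      intervalIntegral.integral_hasDerivAt_right (hfc.intervalIntegrable a x₀)
        (hfc.stronglyMeasurableAtFilter _ _) hfc.continuousAt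
    have hf0 : f x₀ = 0 := by
      have hde := hD.deriv
      rw [hev.deriv_eq] at hde
      simpa using hde.symm
    have : dx y t x₀ ^ p = 0 := hf0
    exact pow_eq_zero_iff hp0.ne' |>.mp this
  -- y is constant in x
  have hyx0 : ∀ t x, y t x = y t 0 := by
    intro t x
    have hdiff : Differentiable ℝ (fun z => y t z) := fun z => (hdxK t z).differentiableAt
    have hz : ∀ z, deriv (fun z' => y t z') z = 0 := fun z => hdx0 t z
    exact is_const_of_deriv_eq_zero hdiff hz x 0
  -- the second derivatives vanish
  have hdxx0 : ∀ t x, dxx y t x = 0 := by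
    intro t x
    show deriv (fun z => deriv (fun z' => y t z') z) x = 0
    have he : (fun z => deriv (fun z' => y t z') z) = fun _ => (0:ℝ) :=
      funext fun z => hdx0 t z
    rw [he, deriv_const]
  have hdtt0 : ∀ t x, dtt y t x = 0 := by
    intro t x
    have h := hpde t x
    rw [hdx0 t x, hdxx0 t x, zero_pow hp0.ne'] at h
    linarith
  -- dt y · 0 is constant
  have hdtc : ∀ t, dt y t 0 = dt y 0 0 := by
    have hdiff : Differentiable ℝ (fun s => dt y s 0) := fun s => (hdttH s 0).differentiableAt
    have hz : ∀ s, deriv (fun s' => dt y s' 0) s = 0 := fun s => by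
      rw [(hdttH s 0).deriv]
      exact hdtt0 s 0
    intro t
    exact is_const_of_deriv_eq_zero hdiff hz t 0
  set c : ℝ := dt y 0 0 with hcdef
  have hlin : ∀ t, y t 0 = y 0 0 + c * t := by
    intro t
    have hder : ∀ s : ℝ, HasDerivAt (fun s' => y s' 0 - c * s') 0 s := by
      intro s
      have h1 : HasDerivAt (fun s' => y s' 0) (dt y s 0) s := by
        rw [hdt s 0]
        exact hdtK s 0
      have h2 : HasDerivAt (fun s' : ℝ => c * s') c s := by
        simpa using (hasDerivAt_id s).const_mul c
      have h3 := h1.sub h2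
      have h4 : dt y s 0 - c = 0 := by rw [hdtc s]; simp [hcdef]
      rwa [h4] at h3
    have hdiff : Differentiable ℝ (fun s' => y s' 0 - c * s') :=
      fun s => (hder s).differentiableAt
    have hz : ∀ s, deriv (fun s' => y s' 0 - c * s') s = 0 := fun s => (hder s).deriv
    have := is_const_of_deriv_eq_zero hdiff hz t 0
    simp only [mul_zero, sub_zero] at this
    linarith
  -- recurrence kills the linear growth
  have hY0c : Continuous (fun θ : Fin n → ℝ => Y θ 0) := by
    have : (fun θ : Fin n → ℝ => Y θ 0) = fun θ => YF (θ, 0) := rfl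
    rw [this]
    exact (hY.continuous).comp (continuous_id.prodMk continuous_const)
  have hy00 : y 0 0 = Y 0 0 := by
    rw [hyY]
    congr 1
    funext i
    simp
  have hc0 : c = 0 := by
    by_contra hcne
    have hcabs : 0 < |c| := abs_pos.mpr hcne
    obtain ⟨t, ht1, hlt⟩ := qp_recur ω hY0c (fun θ i => hYper θ 0 i) hcabs 1
    rw [← hyY, ← hy00, hlin t] at hlt
    have habs : |c * t| < |c| := by
      have : y 0 0 + c * t - y 0 0 = c * t := by ring
      rwa [this] at hlt
    rw [abs_mul, abs_of_nonneg (le_trans zero_le_one ht1)] at habs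
    nlinarith
  refine ⟨y 0 0, fun t x => ?_⟩
  rw [hyx0 t x, hlin t, hc0]
  ring
end
end
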